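/- arXiv:1603.08806 — 9 statements merged into one kernel-verified Lean document; each statement's English description precedes it below -/
import Mathlib

section
/- Let G and H be simple graphs, each on a countably infinite vertex set, and suppose each of them satisfies the extension property: for every pair of disjoint finite sets of vertices U and V, there exists a vertex v (not in U ∪ V) adjacent to every vertex of V and to no vertex of U. Then G and H are isomorphic. (In particular, the Rado graph is unique up to isomorphism.) -/
open FirstOrder Language Substructure

instance : IsEmpty (Language.graph.Relations 0) := ⟨fun r => by cases r⟩

/-- The key back-and-forth step: a graph with the extension property can absorb
any new vertex into a finite partial isomorphism. -/
lemma graph_isExtensionPair {V : Type*} {W : Type*}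
    (G : SimpleGraph V) (H : SimpleGraph W)
    (hH : ∀ U S : Finset W, Disjoint U S →
      ∃ v, v ∉ U ∧ v ∉ S ∧ (∀ s ∈ S, H.Adj v s) ∧ ∀ u ∈ U, ¬ H.Adj v u) :
    @Language.IsExtensionPair Language.graph V W G.structure H.structure := by
  classical
  letI := G.structure
  letI := H.structure
  rw [isExtensionPair_iff_exists_embedding_closure_singleton_sup]
  intro S S_fg f m
  haveI : Finite S := S_fg.finite
  -- images of neighbors and non-neighbors of `m` inside `S`
  have hUfin : (Set.range (fun s : {s : S // ¬ G.Adj m s} => f s.1)).Finite :=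
    Set.finite_range _
  have hVfin : (Set.range (fun s : {s : S // G.Adj m s} => f s.1)).Finite :=
    Set.finite_range _
  have hdisj : Disjoint hUfin.toFinset hVfin.toFinset := by
    rw [Finset.disjoint_left]
    intro a haU haV
    rw [Set.Finite.mem_toFinset] at haU haV
    obtain ⟨s, hs⟩ := haU
    obtain ⟨t, ht⟩ := haV
    exact s.2 (by rw [f.injective (hs.trans ht.symm)]; exact t.2)
  obtain ⟨w, hwU, hwV, hwadj, hwnadj⟩ := hH hUfin.toFinset hVfin.toFinset hdisj
  simp only [Set.Finite.mem_toFinset] at hwU hwV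
  -- `w` avoids the image of `f`
  have hwS : ∀ s : S, f s ≠ w := by
    intro s hs
    by_cases h : G.Adj m s
    · exact hwV ⟨⟨s, h⟩, hs⟩
    · exact hwU ⟨⟨s, h⟩, hs⟩
  have hadjV : ∀ s : S, G.Adj m s → H.Adj w (f s) := by
    intro s h
    exact hwadj _ (by rw [Set.Finite.mem_toFinset]; exact ⟨⟨s, h⟩, rfl⟩)
  have hnadjU : ∀ s : S, ¬ G.Adj m s → ¬ H.Adj w (f s) := by
    intro s h
    exact hwnadj _ (by rw [Set.Finite.mem_toFinset]; exact ⟨⟨s, h⟩, rfl⟩)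
  -- the extended domain
  set D : Language.graph.Substructure V := closure Language.graph (insert m ↑S) with hD
  have hDmem : ∀ x : D, (x : V) ∈ S ∨ (x : V) = m := by
    intro x
    have hx2 : (x : V) ∈ closure Language.graph (insert m ↑S) := x.2
    rw [mem_closure_iff_of_isRelational] at hx2
    rcases hx2 with h | h
    · exact Or.inr h
    · exact Or.inl h
  have hDeq : D = closure Language.graph {m} ⊔ S := by
    rw [← closure_eq (L := Language.graph) S, ← closure_insert]
  -- the extended map
  let F : D → W := fun x => if h : (x : V) ∈ S then f ⟨x, h⟩ else w
  have hFS : ∀ (x : D) (h : (x : V) ∈ S), F x = f ⟨x, h⟩ := by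
    intro x h; simp only [F, dif_pos h]
  have hFm : ∀ (x : D), (x : V) ∉ S → F x = w := by
    intro x h; simp only [F, dif_neg h]
  have hFinj : Function.Injective F := by
    intro x y hxy
    by_cases hx : (x : V) ∈ S <;> by_cases hy : (y : V) ∈ S
    · rw [hFS x hx, hFS y hy] at hxy
      have h2 : ((⟨(x : V), hx⟩ : S) : V) = ((⟨(y : V), hy⟩ : S) : V) :=
        Subtype.ext_iff.mp (f.injective hxy)
      exact Subtype.ext h2
    · rw [hFS x hx, hFm y hy] at hxy
      exact absurd hxy (hwS _)
    · rw [hFm x hx, hFS y hy] at hxy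
      exact absurd hxy.symm (hwS _)
    · apply Subtype.ext
      rw [(hDmem x).resolve_left hx, (hDmem y).resolve_left hy]
  have hFrel : ∀ (x y : D), H.Adj (F x) (F y) ↔ G.Adj (x : V) (y : V) := by
    intro x y
    by_cases hx : (x : V) ∈ S <;> by_cases hy : (y : V) ∈ S
    · rw [hFS x hx, hFS y hy]
      exact (f.map_rel .adj ![⟨(x : V), hx⟩, ⟨(y : V), hy⟩] : _)
    · have hym : (y : V) = m := (hDmem y).resolve_left hy
      rw [hFS x hx, hFm y hy]
      constructor
      · intro h
        by_contra hadj
        rw [hym] at hadj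
        exact hnadjU ⟨x, hx⟩ (fun h' => hadj h'.symm) h.symm
      · intro h
        rw [hym] at h
        exact (hadjV ⟨x, hx⟩ h.symm).symm
    · have hxm : (x : V) = m := (hDmem x).resolve_left hx
      rw [hFm x hx, hFS y hy]
      constructor
      · intro h
        by_contra hadj
        rw [hxm] at hadj
        exact hnadjU ⟨y, hy⟩ (fun h' => hadj h') h
      · intro h
        rw [hxm] at h
        exact hadjV ⟨y, hy⟩ h
    · rw [hFm x hx, hFm y hy, (hDmem x).resolve_left hx, (hDmem y).resolve_left hy]
      exact iff_of_false (H.loopless.irrefl w) (G.loopless.irrefl m)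
  let g : D ↪[Language.graph] W :=
    { toFun := F
      inj' := hFinj
      map_fun' := fun {n} fn => isEmptyElim fn
      map_rel' := by
        intro n r x
        cases r
        exact hFrel (x 0) (x 1) }
  refine ⟨g.comp (Substructure.inclusion (le_of_eq hDeq.symm)), ?_⟩
  ext x
  have hx : (x : V) ∈ S := x.2
  simp only [Embedding.comp_apply]
  have : g (Substructure.inclusion (le_of_eq hDeq.symm)
      (Substructure.inclusion le_sup_right x)) = f ⟨(x : V), hx⟩ := hFS _ hx
  rw [this]

/-- Uniqueness of the Rado graph: any two countably infinite simple graphs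
satisfying the extension property are isomorphic. -/
theorem rado_unique {V W : Type*} [Countable V] [Infinite V] [Countable W] [Infinite W]
    (G : SimpleGraph V) (H : SimpleGraph W)
    (hG : ∀ U S : Finset V, Disjoint U S →
      ∃ v, v ∉ U ∧ v ∉ S ∧ (∀ s ∈ S, G.Adj v s) ∧ ∀ u ∈ U, ¬ G.Adj v u)
    (hH : ∀ U S : Finset W, Disjoint U S →
      ∃ v, v ∉ U ∧ v ∉ S ∧ (∀ s ∈ S, H.Adj v s) ∧ ∀ u ∈ U, ¬ H.Adj v u) :
    Nonempty (G ≃g H) := by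
  letI := G.structure
  letI := H.structure
  obtain ⟨e, -⟩ := equiv_between_cg Structure.cg_of_countable Structure.cg_of_countable
    default (graph_isExtensionPair G H hH) (graph_isExtensionPair H G hG)
  exact ⟨⟨e.toEquiv, fun {a b} => e.map_rel' .adj ![a, b]⟩⟩
end

section
/- Under the linear preferential attachment degree process axioms, if additionally d(t₀) ≥ 1 almost surely, then the probability that d never increases after time t₀ is zero: μ{ω : d(t)(ω) = d(t₀)(ω) for all t ≥ t₀} = 0. -/
open MeasureTheory Filter

/-- If the (standard-or-better) vertex has degree at least 1 at time `t₀`, then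
the probability that its degree never increases after `t₀` is zero. -/
theorem pa_degree_increases {Ω : Type*} {m0 : MeasurableSpace Ω}
    (μ : Measure Ω) [IsProbabilityMeasure μ] (ℱ : Filtration ℕ m0)
    (t₀ : ℕ) (ht₀ : 1 ≤ t₀) (d : ℕ → Ω → ℕ)
    (hadapted : ∀ t, Measurable[ℱ t] (d t))
    (hinit : ∀ᵐ ω ∂μ, d t₀ ω ≤ t₀)
    (hstep : ∀ t, t₀ ≤ t → ∀ᵐ ω ∂μ, d (t + 1) ω = d t ω ∨ d (t + 1) ω = d t ω + 1)
    (hcond : ∀ t, t₀ ≤ t →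
      μ[(fun ω => (d (t + 1) ω : ℝ) - (d t ω : ℝ)) | ℱ t]
        =ᵐ[μ] fun ω => (d t ω : ℝ) / t)
    (hpos : ∀ᵐ ω ∂μ, 1 ≤ d t₀ ω) :
    μ {ω | ∀ t, t₀ ≤ t → d t ω = d t₀ ω} = 0 := by
  -- measurability of each d t w.r.t. the ambient σ-algebra
  have hdmeas : ∀ t, Measurable (d t) := fun t => (hadapted t).mono (ℱ.le t) le_rfl
  -- a.e. bound d t ≤ t for t ≥ t₀
  have hbnd : ∀ t, t₀ ≤ t → ∀ᵐ ω ∂μ, d t ω ≤ t := by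
    intro t ht
    induction t, ht using Nat.le_induction with
    | base => exact hinit
    | succ n hn ih =>
      filter_upwards [ih, hstep n hn] with ω h1 h2
      rcases h2 with h2 | h2 <;> omega
  -- the events E t
  set E : ℕ → Set Ω := fun t => {ω | ∀ s, t₀ ≤ s → s ≤ t → d s ω = d t₀ ω} with hE
  have hE_meas : ∀ t, t₀ ≤ t → MeasurableSet[ℱ t] (E t) := by
    intro t ht
    have heq : E t = ⋂ s ∈ Finset.Icc t₀ t, {ω | d s ω = d t₀ ω} := by
      ext ω
      simp [hE, Set.mem_iInter, Finset.mem_Icc, and_imp]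
    rw [heq]
    refine MeasurableSet.biInter (Finset.Icc t₀ t).countable_toSet fun s hs => ?_
    have hs' : t₀ ≤ s ∧ s ≤ t := Finset.mem_Icc.mp hs
    exact measurableSet_eq_fun
      ((hadapted s).mono (ℱ.mono hs'.2) le_rfl)
      ((hadapted t₀).mono (ℱ.mono ht) le_rfl)
  have hE_meas0 : ∀ t, t₀ ≤ t → MeasurableSet (E t) :=
    fun t ht => (ℱ.le t) _ (hE_meas t ht)
  have hE_antitone : ∀ t, E (t + 1) ⊆ E t := by
    intro t ω hω s hs1 hs2
    exact hω s hs1 (hs2.trans (Nat.le_succ t))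
  -- increment functions
  set f : ℕ → Ω → ℝ := fun t ω => (d (t + 1) ω : ℝ) - (d t ω : ℝ) with hf
  have hcast : ∀ t, Measurable fun ω => (d t ω : ℝ) := fun t =>
    (measurable_from_nat (f := fun n : ℕ => (n : ℝ))).comp (hdmeas t)
  have hf_meas : ∀ t, Measurable (f t) := fun t =>
    (hcast (t + 1)).sub (hcast t)
  have hf01 : ∀ t, t₀ ≤ t → ∀ᵐ ω ∂μ, f t ω = 0 ∨ f t ω = 1 := by
    intro t ht
    filter_upwards [hstep t ht] with ω h
    rcases h with h | h <;> simp [hf, h]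
  have hf_int : ∀ t, t₀ ≤ t → Integrable (f t) μ := by
    intro t ht
    refine Integrable.mono' (integrable_const 1) (hf_meas t).aestronglyMeasurable ?_
    filter_upwards [hf01 t ht] with ω h
    rcases h with h | h <;> simp [h]
  -- key one-step inequality
  have key : ∀ t, t₀ ≤ t →
      (μ (E (t + 1))).toReal ≤ (μ (E t)).toReal - (μ (E t)).toReal / t := by
    intro t ht
    have htpos : (0 : ℝ) < t := by
      have : (1 : ℕ) ≤ t := le_trans ht₀ ht
      exact_mod_cast this
    -- set integral of f over E t equals set integral of d t / t
    have hci : ∫ ω in E t, f t ω ∂μ = ∫ ω in E t, (d t ω : ℝ) / t ∂μ := by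
      rw [← setIntegral_condExp (ℱ.le t) (hf_int t ht) (hE_meas t ht)]
      exact setIntegral_congr_ae (hE_meas0 t ht)
        ((hcond t ht).mono fun ω h _ => h)
    -- lower bound for the set integral
    have hlow : (μ (E t)).toReal / t ≤ ∫ ω in E t, f t ω ∂μ := by
      rw [hci]
      have h1 : ∫ ω in E t, (1 : ℝ) / t ∂μ = (μ (E t)).toReal / t := by
        rw [setIntegral_const]
        simp [smul_eq_mul, div_eq_mul_inv, mul_comm]
        exact Or.inl rfl
      rw [← h1]
      refine setIntegral_mono_ae_restrict
        (integrableOn_const (measure_ne_top _ _) enorm_ne_top) ?_ ?_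
      · -- integrability of d t / t on E t
        refine Integrable.integrableOn ?_
        refine Integrable.mono' (integrable_const 1)
          ((hcast t).div_const _).aestronglyMeasurable ?_
        filter_upwards [hbnd t ht] with ω h
        rw [Real.norm_eq_abs, abs_div, abs_of_nonneg (by positivity),
          abs_of_pos htpos, div_le_one htpos]
        exact_mod_cast h
      · -- a.e. on E t: 1/t ≤ d t / t
        rw [Filter.EventuallyLE, ae_restrict_iff' (hE_meas0 t ht)]
        filter_upwards [hpos] with ω h hω
        have hd : d t ω = d t₀ ω := hω t ht le_rfl
        have h1 : (1 : ℝ) ≤ (d t ω : ℝ) := by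
          rw [hd]; exact_mod_cast h
        gcongr
    -- upper bound for the set integral
    have hup : (μ (E (t + 1))).toReal + ∫ ω in E t, f t ω ∂μ ≤ (μ (E t)).toReal := by
      have hint1 : Integrable ((E (t + 1)).indicator fun _ => (1 : ℝ)) μ :=
        (integrable_const 1).indicator (hE_meas0 (t + 1) (ht.trans (Nat.le_succ t)))
      have hint2 : Integrable ((E t).indicator (f t)) μ :=
        (hf_int t ht).indicator (hE_meas0 t ht)
      have hint3 : Integrable ((E t).indicator fun _ => (1 : ℝ)) μ :=
        (integrable_const 1).indicator (hE_meas0 t ht)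
      have hptwise : ∀ᵐ ω ∂μ,
          (E (t + 1)).indicator (fun _ => (1 : ℝ)) ω + (E t).indicator (f t) ω
            ≤ (E t).indicator (fun _ => (1 : ℝ)) ω := by
        filter_upwards [hf01 t ht] with ω h01
        by_cases hω1 : ω ∈ E (t + 1)
        · have hωt : ω ∈ E t := hE_antitone t hω1
          have hfz : f t ω = 0 := by
            have e1 : d (t + 1) ω = d t₀ ω :=
              hω1 (t + 1) (ht.trans (Nat.le_succ t)) le_rfl
            have e2 : d t ω = d t₀ ω := hωt t ht le_rfl
            simp [hf, e1, e2]
          simp [Set.indicator_of_mem hω1, Set.indicator_of_mem hωt, hfz]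
        · by_cases hωt : ω ∈ E t
          · have hle1 : f t ω ≤ 1 := by rcases h01 with h | h <;> simp [h]
            simp [Set.indicator_of_notMem hω1, Set.indicator_of_mem hωt, hle1]
          · have hω1' : ω ∉ E (t + 1) := hω1
            simp [Set.indicator_of_notMem hω1, Set.indicator_of_notMem hωt]
      have hint := integral_mono_ae (hint1.add hint2) hint3 hptwise
      simp only [Pi.add_apply] at hint
      rw [integral_add hint1 hint2, integral_indicator_const (1 : ℝ)
          (hE_meas0 (t + 1) (ht.trans (Nat.le_succ t))),
        integral_indicator_const (1 : ℝ) (hE_meas0 t ht),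
        integral_indicator (hE_meas0 t ht)] at hint
      simpa [Measure.real] using hint
    linarith
  -- induction: (μ (E t)).toReal ≤ t₀ / t
  have hqbnd : ∀ t, t₀ ≤ t → (μ (E t)).toReal ≤ (t₀ : ℝ) / t := by
    intro t ht
    induction t, ht using Nat.le_induction with
    | base =>
      have h1 : (μ (E t₀)).toReal ≤ (μ (Set.univ : Set Ω)).toReal :=
        ENNReal.toReal_mono (measure_ne_top _ _) (measure_mono (Set.subset_univ _))
      have h2 : (t₀ : ℝ) / t₀ = 1 := by
        have : (0 : ℝ) < t₀ := by exact_mod_cast ht₀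
        field_simp
      rw [h2]
      simpa using h1
    | succ n hn ih =>
      have hkey := key n hn
      have hx : (1 : ℝ) ≤ n := by exact_mod_cast le_trans ht₀ hn
      have hq0 : (0 : ℝ) ≤ (μ (E n)).toReal := ENNReal.toReal_nonneg
      have ht0pos : (0 : ℝ) ≤ (t₀ : ℝ) := by positivity
      set q := (μ (E n)).toReal
      set x := (n : ℝ)
      have hxpos : (0 : ℝ) < x := lt_of_lt_of_le one_pos hx
      have h1 : q - q / x ≤ (t₀ / x) - (t₀ / x) / x := by
        have hfac : 0 ≤ 1 - 1 / x := by
          rw [sub_nonneg, div_le_one hxpos]; exact hx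
        have : q * (1 - 1 / x) ≤ (t₀ / x) * (1 - 1 / x) :=
          mul_le_mul_of_nonneg_right ih hfac
        calc q - q / x = q * (1 - 1 / x) := by ring
          _ ≤ (t₀ / x) * (1 - 1 / x) := this
          _ = (t₀ / x) - (t₀ / x) / x := by ring
      have h2 : (t₀ / x) - (t₀ / x) / x ≤ (t₀ : ℝ) / (x + 1) := by
        have e : (t₀ : ℝ) / x - (t₀ / x) / x = t₀ * (x - 1) / x ^ 2 := by
          field_simp
        rw [e, div_le_div_iff₀ (by positivity) (by positivity)]
        nlinarith
      have hcast : ((n + 1 : ℕ) : ℝ) = x + 1 := by push_cast; ring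
      rw [hcast]
      calc (μ (E (n + 1))).toReal ≤ q - q / x := hkey
        _ ≤ (t₀ / x) - (t₀ / x) / x := h1
        _ ≤ (t₀ : ℝ) / (x + 1) := h2
  -- conclude
  set S : Set Ω := {ω | ∀ t, t₀ ≤ t → d t ω = d t₀ ω} with hS
  have hsub : ∀ t, S ⊆ E t := by
    intro t ω hω s hs1 _
    exact hω s hs1
  have hSle : ∀ t, t₀ ≤ t → (μ S).toReal ≤ (t₀ : ℝ) / t := by
    intro t ht
    exact le_trans (ENNReal.toReal_mono (measure_ne_top _ _)
      (measure_mono (hsub t))) (hqbnd t ht)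
  have hlim : Tendsto (fun t : ℕ => (t₀ : ℝ) / t) atTop (nhds 0) :=
    tendsto_const_div_atTop_nhds_zero_nat _
  have hzero : (μ S).toReal ≤ 0 :=
    ge_of_tendsto hlim (eventually_atTop.2 ⟨t₀, fun t ht => hSle t ht⟩)
  have : (μ S).toReal = 0 := le_antisymm hzero ENNReal.toReal_nonneg
  rcases (ENNReal.toReal_eq_zero_iff _).mp this with h | h
  · exact h
  · exact absurd h (measure_ne_top _ _)
end

section
/- Under the linear preferential attachment degree process axioms, if additionally 1 ≤ d(t₀) ≤ t₀ − 1 almost surely (the vertex is standard), then almost surely d(t) → ∞ as t → ∞, and almost surely t − d(t) → ∞ as t → ∞. -/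
open MeasureTheory Filter Finset

section Aux

variable {Ω : Type*} {m0 : MeasurableSpace Ω}

/-- Generic lemma: an adapted `{0,1}`-increment process with conditional increment
`d t / t` and `d t₀ ≥ 1` a.s. tends to infinity a.s. -/
lemma pa_aux (μ : Measure Ω) [IsProbabilityMeasure μ] (ℱ : Filtration ℕ m0)
    (t₀ : ℕ) (ht₀ : 1 ≤ t₀) (d : ℕ → Ω → ℕ)
    (hadapted : ∀ t, Measurable[ℱ t] (d t))
    (hstep : ∀ t, t₀ ≤ t → ∀ᵐ ω ∂μ, d (t + 1) ω = d t ω ∨ d (t + 1) ω = d t ω + 1)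
    (hcond : ∀ t, t₀ ≤ t →
      μ[(fun ω => (d (t + 1) ω : ℝ) - (d t ω : ℝ)) | ℱ t]
        =ᵐ[μ] fun ω => (d t ω : ℝ) / t)
    (hpos : ∀ᵐ ω ∂μ, 1 ≤ d t₀ ω) :
    ∀ᵐ ω ∂μ, Tendsto (fun t => d t ω) atTop atTop := by
  have hd : ∀ t, Measurable (d t) := fun t => (hadapted t).mono (ℱ.le t) le_rfl
  have hgmeas : ∀ t, Measurable fun ω => (d (t+1) ω : ℝ) - d t ω := fun t =>
    (measurable_from_top.comp (hd (t+1))).sub (measurable_from_top.comp (hd t))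
  have hgint : ∀ t, t₀ ≤ t → Integrable (fun ω => (d (t+1) ω : ℝ) - d t ω) μ := by
    intro t ht
    refine (integrable_const (1:ℝ)).mono' (hgmeas t).aestronglyMeasurable ?_
    filter_upwards [hstep t ht] with ω h
    rcases h with h | h <;> rw [h] <;> push_cast <;> simp
  -- one-step bound
  have key : ∀ t, t₀ ≤ t → ∀ k : ℕ, ∀ B : Set Ω, MeasurableSet[ℱ t] B →
      (∀ ω ∈ B, d t ω = k) →
      (μ (B ∩ {ω | d (t+1) ω = k})).toReal ≤ (1 - (k:ℝ)/t) * (μ B).toReal := by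
    intro t ht k B hB hBk
    have hBm : MeasurableSet B := ℱ.le t B hB
    set g : Ω → ℝ := fun ω => (d (t+1) ω : ℝ) - d t ω with hgdef
    have hgi : Integrable g μ := hgint t ht
    have h1 : ∫ ω in B, g ω ∂μ = ((k:ℝ)/t) * (μ B).toReal := by
      rw [← setIntegral_condExp (ℱ.le t) hgi hB]
      calc ∫ ω in B, (μ[g|ℱ t]) ω ∂μ
          = ∫ ω in B, (d t ω : ℝ)/t ∂μ := by
            refine setIntegral_congr_ae hBm ?_
            exact (hcond t ht).mono fun ω h _ => h
        _ = ∫ _ω in B, ((k:ℝ)/t) ∂μ :=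
            setIntegral_congr_fun hBm (fun ω hω => by rw [hBk ω hω])
        _ = (μ B).toReal • ((k:ℝ)/t) := setIntegral_const _
        _ = ((k:ℝ)/t) * (μ B).toReal := by rw [smul_eq_mul, mul_comm]
    set E : Set Ω := {ω | d (t+1) ω = k} with hEdef
    have hEm : MeasurableSet E := hd (t+1) (measurableSet_singleton k)
    have h2 : (μ (B ∩ E)).toReal = ∫ _ω in B ∩ E, (1:ℝ) ∂μ := by
      rw [setIntegral_const]; simp; rfl
    have hint1g : Integrable (fun ω => 1 - g ω) μ := (integrable_const (1:ℝ)).sub hgi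
    have h3 : ∫ _ω in B ∩ E, (1:ℝ) ∂μ ≤ ∫ ω in B ∩ E, (1 - g ω) ∂μ := by
      refine setIntegral_mono_on (integrable_const (1:ℝ)).integrableOn
        hint1g.integrableOn (hBm.inter hEm) ?_
      rintro ω ⟨hb, he⟩
      have h0 : g ω = 0 := by
        simp only [hgdef]
        rw [show d (t+1) ω = k from he, hBk ω hb, sub_self]
      rw [h0]; norm_num
    have h4 : ∫ ω in B ∩ E, (1 - g ω) ∂μ ≤ ∫ ω in B, (1 - g ω) ∂μ := by
      refine setIntegral_mono_set hint1g.integrableOn ?_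
        (HasSubset.Subset.eventuallyLE Set.inter_subset_left)
      refine ae_restrict_of_ae ?_
      filter_upwards [hstep t ht] with ω h
      rcases h with h | h <;> simp only [Pi.zero_apply, hgdef, h] <;> push_cast <;> linarith
    have h5 : ∫ ω in B, (1 - g ω) ∂μ = (1 - (k:ℝ)/t) * (μ B).toReal := by
      rw [integral_sub (integrable_const (1:ℝ)).integrableOn hgi.integrableOn, h1,
        setIntegral_const]
      simp; simp only [measureReal_def]; ring
    calc (μ (B ∩ E)).toReal ≤ ∫ ω in B, (1 - g ω) ∂μ := by
          rw [h2]; exact h3.trans h4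
      _ = (1 - (k:ℝ)/t) * (μ B).toReal := h5
  -- iterated bound: stuck events are null
  have iter : ∀ k t, t₀ ≤ t → 1 ≤ k → k ≤ t →
      μ {ω | ∀ s, d (t + s) ω = k} = 0 := by
    intro k t ht hk hkt
    have htpos : ∀ j : ℕ, (0:ℝ) < (t:ℝ) + j := by
      intro j
      have : (1:ℝ) ≤ (t:ℝ) := by exact_mod_cast le_trans ht₀ ht
      have := Nat.cast_nonneg (α := ℝ) j
      linarith
    set A : ℕ → Set Ω := fun n => {ω | ∀ j ≤ n, d (t+j) ω = k} with hA
    have hAmeas : ∀ n, MeasurableSet[ℱ (t+n)] (A n) := by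
      intro n
      have hrw : A n = ⋂ j ∈ Set.Iic n, (d (t+j)) ⁻¹' {k} := by
        ext ω; simp [hA]
      rw [hrw]
      exact MeasurableSet.biInter (Set.to_countable _) fun j hj =>
        ℱ.mono (by simpa using hj : t+j ≤ t+n) _
          ((hadapted (t+j)) (measurableSet_singleton k))
    have hbound : ∀ n, (μ (A n)).toReal ≤ ∏ j ∈ range n, (1 - (k:ℝ)/(t+j)) := by
      intro n
      induction n with
      | zero =>
        simp only [range_zero, prod_empty]
        exact ENNReal.toReal_le_of_le_ofReal zero_le_one (by simpa using prob_le_one)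
      | succ n ih =>
        have hsub : A (n+1) ⊆ A n ∩ {ω | d ((t+n)+1) ω = k} := by
          intro ω hω
          exact ⟨fun j hj => hω j (by omega), by
            have := hω (n+1) le_rfl
            simpa [Nat.add_assoc] using this⟩
        have hk1 := key (t+n) (by omega) k (A n) (hAmeas n) (fun ω hω => hω n le_rfl)
        have hnn : (0:ℝ) ≤ 1 - (k:ℝ)/(t+n) := by
          have h2 : (k:ℝ) ≤ (t:ℝ) + n := by
            have : (k:ℝ) ≤ (t:ℝ) := by exact_mod_cast hkt
            have := Nat.cast_nonneg (α := ℝ) n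
            linarith
          have := div_le_one_of_le₀ h2 (htpos n).le
          linarith
        calc (μ (A (n+1))).toReal
            ≤ (μ (A n ∩ {ω | d ((t+n)+1) ω = k})).toReal :=
              ENNReal.toReal_mono (measure_ne_top μ _) (measure_mono hsub)
          _ ≤ (1 - (k:ℝ)/(t+n)) * (μ (A n)).toReal := by
              simpa [Nat.cast_add] using hk1
          _ ≤ (1 - (k:ℝ)/(t+n)) * ∏ j ∈ range n, (1 - (k:ℝ)/(t+j)) :=
              mul_le_mul_of_nonneg_left ih hnn
          _ = ∏ j ∈ range (n+1), (1 - (k:ℝ)/(t+j)) := by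
              rw [prod_range_succ, mul_comm]
    have hprod : ∀ n, ∏ j ∈ range n, (1 - (k:ℝ)/(t+j))
        ≤ Real.exp (-∑ j ∈ range n, (1:ℝ)/(t+j)) := by
      intro n
      calc ∏ j ∈ range n, (1 - (k:ℝ)/(t+j))
          ≤ ∏ j ∈ range n, Real.exp (-((1:ℝ)/(t+j))) := by
            refine Finset.prod_le_prod ?_ ?_
            · intro j _
              have h2 : (k:ℝ) ≤ (t:ℝ) + j := by
                have : (k:ℝ) ≤ (t:ℝ) := by exact_mod_cast hkt
                have := Nat.cast_nonneg (α := ℝ) j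
                linarith
              have := div_le_one_of_le₀ h2 (htpos j).le
              linarith
            · intro j _
              have hexp := Real.add_one_le_exp (-((1:ℝ)/(t+j)))
              have hkk : (1:ℝ)/(t+j) ≤ (k:ℝ)/(t+j) := by
                gcongr
                exact_mod_cast hk
              linarith
        _ = Real.exp (∑ j ∈ range n, -((1:ℝ)/(t+j))) := (Real.exp_sum _ _).symm
        _ = Real.exp (-∑ j ∈ range n, (1:ℝ)/(t+j)) := by rw [Finset.sum_neg_distrib]
    -- the harmonic sum diverges
    have hsum : Tendsto (fun n => ∑ j ∈ range n, (1:ℝ)/(t+j)) atTop atTop := by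
      have hH := Real.tendsto_sum_range_one_div_nat_succ_atTop
      have hcomp : ∀ n, (∑ i ∈ range (t+n), (1:ℝ)/(i+1))
          - ∑ i ∈ range t, (1:ℝ)/(i+1) ≤ ∑ j ∈ range n, (1:ℝ)/(t+j) := by
        intro n
        rw [Finset.sum_range_add, add_sub_cancel_left]
        refine Finset.sum_le_sum fun j _ => ?_
        have h1 : (0:ℝ) < (t:ℝ) + j := htpos j
        refine one_div_le_one_div_of_le h1 ?_
        push_cast
        linarith
      have h1 : Tendsto (fun n : ℕ => t + n) atTop atTop := by
        simpa [Nat.add_comm] using tendsto_add_atTop_nat t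
      have h2 : Tendsto (fun n : ℕ => (∑ i ∈ range (t+n), (1:ℝ)/(i+1))
          - ∑ i ∈ range t, (1:ℝ)/(i+1)) atTop atTop := by
        simpa [sub_eq_add_neg, Function.comp] using
          tendsto_atTop_add_const_right atTop (-(∑ i ∈ range t, (1:ℝ)/(i+1))) (hH.comp h1)
      exact tendsto_atTop_mono hcomp h2
    have hzero : Tendsto (fun n => Real.exp (-∑ j ∈ range n, (1:ℝ)/(t+j))) atTop (nhds 0) :=
      Real.tendsto_exp_neg_atTop_nhds_zero.comp hsum
    have hSsub : ∀ n, {ω | ∀ s, d (t + s) ω = k} ⊆ A n := fun n ω h j _ => h j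
    have hle0 : (μ {ω | ∀ s, d (t + s) ω = k}).toReal ≤ 0 := by
      refine ge_of_tendsto' hzero fun n => ?_
      exact le_trans (ENNReal.toReal_mono (measure_ne_top μ _) (measure_mono (hSsub n)))
        (le_trans (hbound n) (hprod n))
    have heq0 : (μ {ω | ∀ s, d (t + s) ω = k}).toReal = 0 :=
      le_antisymm hle0 ENNReal.toReal_nonneg
    rcases (ENNReal.toReal_eq_zero_iff _).1 heq0 with h | h
    · exact h
    · exact absurd h (measure_ne_top μ _)
  -- combine the a.e. facts
  have hstep_all : ∀ᵐ ω ∂μ, ∀ t, t₀ ≤ t →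
      (d (t+1) ω = d t ω ∨ d (t+1) ω = d t ω + 1) := by
    rw [ae_all_iff]
    intro t
    by_cases ht : t₀ ≤ t
    · exact (hstep t ht).mono fun ω h _ => h
    · exact ae_of_all _ fun ω h => absurd h ht
  have hstuck : ∀ᵐ ω ∂μ, ∀ k t, t₀ ≤ t → 1 ≤ k → k ≤ t →
      ¬ ∀ s, d (t+s) ω = k := by
    rw [ae_all_iff]
    intro k
    rw [ae_all_iff]
    intro t
    by_cases h : t₀ ≤ t ∧ 1 ≤ k ∧ k ≤ t
    · obtain ⟨h1, h2, h3⟩ := h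
      have hnull := iter k t h1 h2 h3
      have : ∀ᵐ ω ∂μ, ¬ ∀ s, d (t+s) ω = k := by
        rw [ae_iff]
        simpa [not_not] using hnull
      exact this.mono fun ω hω _ _ _ => hω
    · exact ae_of_all _ fun ω h1 h2 h3 => absurd ⟨h1, h2, h3⟩ h
  filter_upwards [hpos, hstep_all, hstuck] with ω h1 h2 h3
  by_contra hnot
  have hmono : ∀ s u, t₀ ≤ s → s ≤ u → d s ω ≤ d u ω := by
    intro s u hs hsu
    induction u, hsu using Nat.le_induction with
    | base => exact le_rfl
    | succ u hsu ih => rcases h2 u (le_trans hs hsu) with h | h <;> omega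
  rw [tendsto_atTop_atTop] at hnot
  push_neg at hnot
  obtain ⟨b, hb⟩ := hnot
  have hbd : ∀ n, d (t₀+n) ω < b := by
    intro n
    obtain ⟨a, ha, hab⟩ := hb (t₀+n)
    exact lt_of_le_of_lt (hmono _ _ (by omega) ha) hab
  set V : Set ℕ := Set.range fun n => d (t₀+n) ω with hV
  have hVne : V.Nonempty := ⟨d (t₀+0) ω, 0, rfl⟩
  have hVbdd : BddAbove V := ⟨b, by rintro x ⟨n, rfl⟩; exact (hbd n).le⟩
  set k := sSup V with hk
  obtain ⟨n₀, hn₀⟩ := Nat.sSup_mem hVne hVbdd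
  have hn₀' : d (t₀ + n₀) ω = k := hn₀
  have hub : ∀ n, d (t₀+n) ω ≤ k := fun n => le_csSup hVbdd ⟨n, rfl⟩
  have hk1 : 1 ≤ k := le_trans (by simpa using h1) (by simpa using hub 0)
  set t₁ := max (t₀+n₀) k with ht₁
  have ht₁0 : t₀ ≤ t₁ := le_trans (by omega) (le_max_left _ _)
  have hstuck' : ∀ s, d (t₁+s) ω = k := by
    intro s
    have hge : k ≤ d (t₁+s) ω := by
      have := hmono (t₀+n₀) (t₁+s) (by omega) (by omega)
      omega
    have hle : d (t₁+s) ω ≤ k := by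
      obtain ⟨m, hm⟩ : ∃ m, t₁ + s = t₀ + m := ⟨t₁ + s - t₀, by omega⟩
      rw [hm]; exact hub m
    omega
  exact h3 k t₁ ht₁0 hk1 (le_max_right _ _) hstuck'

end Aux

/-- For a standard vertex, almost surely both the (black) degree `d t` and the
complementary (white) degree `t - d t` tend to infinity. -/
theorem pa_degree_tendsto_atTop {Ω : Type*} {m0 : MeasurableSpace Ω}
    (μ : Measure Ω) [IsProbabilityMeasure μ] (ℱ : Filtration ℕ m0)
    (t₀ : ℕ) (ht₀ : 1 ≤ t₀) (d : ℕ → Ω → ℕ)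
    (hadapted : ∀ t, Measurable[ℱ t] (d t))
    (hinit : ∀ᵐ ω ∂μ, d t₀ ω ≤ t₀)
    (hstep : ∀ t, t₀ ≤ t → ∀ᵐ ω ∂μ, d (t + 1) ω = d t ω ∨ d (t + 1) ω = d t ω + 1)
    (hcond : ∀ t, t₀ ≤ t →
      μ[(fun ω => (d (t + 1) ω : ℝ) - (d t ω : ℝ)) | ℱ t]
        =ᵐ[μ] fun ω => (d t ω : ℝ) / t)
    (hstd : ∀ᵐ ω ∂μ, 1 ≤ d t₀ ω ∧ d t₀ ω ≤ t₀ - 1) :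
    (∀ᵐ ω ∂μ, Tendsto (fun t => d t ω) atTop atTop) ∧
      (∀ᵐ ω ∂μ, Tendsto (fun t => t - d t ω) atTop atTop) := by
  have hd : ∀ t, Measurable (d t) := fun t => (hadapted t).mono (ℱ.le t) le_rfl
  have hgint : ∀ t, t₀ ≤ t → Integrable (fun ω => (d (t+1) ω : ℝ) - d t ω) μ := by
    intro t ht
    have hgmeas : Measurable fun ω => (d (t+1) ω : ℝ) - d t ω :=
      (measurable_from_top.comp (hd (t+1))).sub (measurable_from_top.comp (hd t))
    refine (integrable_const (1:ℝ)).mono' hgmeas.aestronglyMeasurable ?_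
    filter_upwards [hstep t ht] with ω h
    rcases h with h | h <;> rw [h] <;> push_cast <;> simp
  have hstep_all : ∀ᵐ ω ∂μ, ∀ t, t₀ ≤ t →
      (d (t+1) ω = d t ω ∨ d (t+1) ω = d t ω + 1) := by
    rw [ae_all_iff]
    intro t
    by_cases ht : t₀ ≤ t
    · exact (hstep t ht).mono fun ω h _ => h
    · exact ae_of_all _ fun ω h => absurd h ht
  have hle : ∀ᵐ ω ∂μ, ∀ t, t₀ ≤ t → d t ω ≤ t := by
    filter_upwards [hinit, hstep_all] with ω h0 h2
    intro t ht
    induction t, ht using Nat.le_induction with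
    | base => exact h0
    | succ t ht ih => rcases h2 t ht with h | h <;> omega
  constructor
  · exact pa_aux μ ℱ t₀ ht₀ d hadapted hstep hcond (hstd.mono fun ω h => h.1)
  · -- apply pa_aux to the white degree w t ω = t - d t ω
    set w : ℕ → Ω → ℕ := fun t ω => t - d t ω with hw
    have hadapted' : ∀ t, Measurable[ℱ t] (w t) := fun t =>
      measurable_from_top.comp (hadapted t)
    have hstep' : ∀ t, t₀ ≤ t → ∀ᵐ ω ∂μ,
        w (t+1) ω = w t ω ∨ w (t+1) ω = w t ω + 1 := by
      intro t ht
      filter_upwards [hstep t ht, hle] with ω h hL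
      have h1 : d t ω ≤ t := hL t ht
      rcases h with h | h
      · right; simp only [hw]; omega
      · left; simp only [hw]; omega
    have hcond' : ∀ t, t₀ ≤ t →
        μ[(fun ω => (w (t + 1) ω : ℝ) - (w t ω : ℝ)) | ℱ t]
          =ᵐ[μ] fun ω => (w t ω : ℝ) / t := by
      intro t ht
      have htR : (0:ℝ) < (t:ℝ) := by exact_mod_cast lt_of_lt_of_le ht₀ ht
      set g : Ω → ℝ := fun ω => (d (t+1) ω : ℝ) - d t ω with hgdef
      have e1 : (fun ω => (w (t + 1) ω : ℝ) - (w t ω : ℝ))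
          =ᵐ[μ] (fun _ => (1:ℝ)) - g := by
        filter_upwards [hle] with ω hL
        have h1 : d t ω ≤ t := hL t ht
        have h2 : d (t+1) ω ≤ t + 1 := hL (t+1) (by omega)
        simp only [hw, Pi.sub_apply, hgdef]
        rw [Nat.cast_sub h1, Nat.cast_sub h2]
        push_cast
        ring
      calc μ[(fun ω => (w (t + 1) ω : ℝ) - (w t ω : ℝ)) | ℱ t]
          =ᵐ[μ] μ[(fun _ => (1:ℝ)) - g | ℱ t] := condExp_congr_ae e1
        _ =ᵐ[μ] μ[(fun _ => (1:ℝ)) | ℱ t] - μ[g | ℱ t] :=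
            condExp_sub (integrable_const 1) (hgint t ht) _
        _ =ᵐ[μ] fun ω => (w t ω : ℝ) / t := by
            rw [condExp_const (ℱ.le t)]
            filter_upwards [hcond t ht, hle] with ω hc hL
            have h1 : d t ω ≤ t := hL t ht
            simp only [Pi.sub_apply, hgdef, hw]
            rw [hc, Nat.cast_sub h1]
            field_simp
      -- done
    have hpos' : ∀ᵐ ω ∂μ, 1 ≤ w t₀ ω := by
      filter_upwards [hstd] with ω h
      simp only [hw]
      omega
    exact pa_aux μ ℱ t₀ ht₀ w hadapted' hstep' hcond' hpos'
end

section
/- Under the linear preferential attachment degree process axioms, there exists a random variable x : Ω → [0,1] such that almost surely X(t) := d(t)/t converges to x as t → ∞; that is, almost surely d(t) = (x + o(1))·t. -/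
open MeasureTheory Filter Topology

/-- Almost sure convergence of `X t = d t / t` to a limit `x ∈ [0,1]`. -/
theorem pa_X_converges {Ω : Type*} {m0 : MeasurableSpace Ω}
    (μ : Measure Ω) [IsProbabilityMeasure μ] (ℱ : Filtration ℕ m0)
    (t₀ : ℕ) (ht₀ : 1 ≤ t₀) (d : ℕ → Ω → ℕ)
    (hadapted : ∀ t, Measurable[ℱ t] (d t))
    (hinit : ∀ᵐ ω ∂μ, d t₀ ω ≤ t₀)
    (hstep : ∀ t, t₀ ≤ t → ∀ᵐ ω ∂μ, d (t + 1) ω = d t ω ∨ d (t + 1) ω = d t ω + 1)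
    (hcond : ∀ t, t₀ ≤ t →
      μ[(fun ω => (d (t + 1) ω : ℝ) - (d t ω : ℝ)) | ℱ t]
        =ᵐ[μ] fun ω => (d t ω : ℝ) / t) :
    ∃ x : Ω → ℝ, (∀ ω, x ω ∈ Set.Icc (0 : ℝ) 1) ∧
      ∀ᵐ ω ∂μ, Tendsto (fun t => (d t ω : ℝ) / t) atTop (𝓝 (x ω)) := by
  -- almost sure bound d t ≤ t for t ≥ t₀
  have hsteps : ∀ᵐ ω ∂μ, ∀ t, t₀ ≤ t →
      (d (t + 1) ω = d t ω ∨ d (t + 1) ω = d t ω + 1) := by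
    rw [ae_all_iff]
    intro t
    by_cases h : t₀ ≤ t
    · exact (hstep t h).mono fun ω hω _ => hω
    · filter_upwards with ω ht; exact absurd ht h
  have hbound : ∀ᵐ ω ∂μ, ∀ t, t₀ ≤ t → d t ω ≤ t := by
    filter_upwards [hinit, hsteps] with ω h0 hs
    intro t ht
    induction t with
    | zero => omega
    | succ n ih =>
      rcases Nat.lt_or_ge n t₀ with h | h
      · have he : t₀ = n + 1 := by omega
        rw [he] at h0; exact h0
      · rcases hs n h with h1 | h1 <;> omega
  -- shifted filtration and process
  set ℱ' : Filtration ℕ m0 :=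
    ⟨fun n => ℱ (t₀ + n), fun i j hij => ℱ.mono (by omega), fun n => ℱ.le _⟩ with hℱ'
  set f : ℕ → Ω → ℝ := fun n ω => (d (t₀ + n) ω : ℝ) / (t₀ + n : ℕ) with hfdef
  have hdm : ∀ t, Measurable fun ω => (d t ω : ℝ) := fun t =>
    measurable_from_top.comp ((hadapted t).mono (ℱ.le t) le_rfl)
  have hdint : ∀ t, t₀ ≤ t → Integrable (fun ω => (d t ω : ℝ)) μ := by
    intro t ht
    refine (integrable_const (t : ℝ)).mono' (hdm t).aestronglyMeasurable ?_
    filter_upwards [hbound] with ω h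
    rw [Real.norm_eq_abs, abs_of_nonneg (Nat.cast_nonneg _)]
    exact_mod_cast h t ht
  have hfmeas : ∀ n, Measurable[ℱ' n] (f n) := fun n =>
    (measurable_from_top.comp (hadapted (t₀ + n))).div_const _
  have hfint : ∀ n, Integrable (f n) μ := fun n =>
    (hdint (t₀ + n) (by omega)).div_const _
  -- martingale property
  have hmart : Martingale f ℱ' μ := by
    refine martingale_nat (fun n => (hfmeas n).stronglyMeasurable) hfint (fun n => ?_)
    set t := t₀ + n with htdef
    have htt : t₀ ≤ t := by omega
    have htpos : (0 : ℝ) < t := by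
      have : 1 ≤ t := le_trans ht₀ htt
      exact_mod_cast this
    have h1 : Integrable (fun ω => (d (t + 1) ω : ℝ)) μ := hdint (t + 1) (by omega)
    have h2 : Integrable (fun ω => (d t ω : ℝ)) μ := hdint t htt
    have hdtm : μ[(fun ω => (d t ω : ℝ)) | ℱ t] = fun ω => (d t ω : ℝ) :=
      condExp_of_stronglyMeasurable (ℱ.le t)
        ((measurable_from_top.comp (hadapted t)).stronglyMeasurable) h2
    have hsub : μ[(fun ω => (d (t + 1) ω : ℝ) - (d t ω : ℝ)) | ℱ t]
        =ᵐ[μ] μ[(fun ω => (d (t + 1) ω : ℝ)) | ℱ t] - μ[(fun ω => (d t ω : ℝ)) | ℱ t] :=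
      condExp_sub h1 h2 _
    have hplus : μ[(fun ω => (d (t + 1) ω : ℝ)) | ℱ t]
        =ᵐ[μ] fun ω => (d t ω : ℝ) + (d t ω : ℝ) / t := by
      have := (hsub.symm.trans (hcond t htt))
      filter_upwards [this] with ω hω
      have hω' : (μ[(fun ω => (d (t + 1) ω : ℝ)) | ℱ t]) ω - (d t ω : ℝ)
          = (d t ω : ℝ) / t := by
        simpa [hdtm] using hω
      linarith [hω']
    have e1 : f (n + 1) = (((t : ℝ) + 1)⁻¹) • (fun ω => (d (t + 1) ω : ℝ)) := by
      funext ω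
      show (d (t₀ + (n + 1)) ω : ℝ) / ((t₀ + (n + 1) : ℕ) : ℝ) = _
      have : t₀ + (n + 1) = t + 1 := by omega
      rw [this]
      push_cast
      simp [div_eq_inv_mul]
    have hsm : μ[(((t : ℝ) + 1)⁻¹) • (fun ω => (d (t + 1) ω : ℝ)) | ℱ t]
        =ᵐ[μ] (((t : ℝ) + 1)⁻¹) • μ[(fun ω => (d (t + 1) ω : ℝ)) | ℱ t] :=
      condExp_smul _ _ _
    have key : μ[f (n + 1) | ℱ' n] =ᵐ[μ] f n := by
      show μ[f (n + 1) | ℱ t] =ᵐ[μ] f n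
      rw [e1]
      refine hsm.trans ?_
      filter_upwards [hplus] with ω hω
      show (((t : ℝ) + 1)⁻¹) * (μ[(fun ω => (d (t + 1) ω : ℝ)) | ℱ t]) ω = f n ω
      rw [hω]
      show _ = (d (t₀ + n) ω : ℝ) / ((t₀ + n : ℕ) : ℝ)
      rw [← htdef]
      field_simp
    exact key.symm
  -- L¹ bound
  have hfbdd : ∀ᵐ ω ∂μ, ∀ n, 0 ≤ f n ω ∧ f n ω ≤ 1 := by
    filter_upwards [hbound] with ω h
    intro n
    have htt : t₀ ≤ t₀ + n := by omega
    have hpos : (0 : ℝ) < ((t₀ + n : ℕ) : ℝ) := by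
      have : 1 ≤ t₀ + n := by omega
      exact_mod_cast this
    constructor
    · exact div_nonneg (Nat.cast_nonneg _) hpos.le
    · rw [div_le_one hpos]
      exact_mod_cast h (t₀ + n) htt
  have hL1 : ∀ n, eLpNorm (f n) 1 μ ≤ (1 : NNReal) := by
    intro n
    have hb : ∀ᵐ ω ∂μ, ‖f n ω‖ ≤ (1 : ℝ) := by
      filter_upwards [hfbdd] with ω h
      rw [Real.norm_eq_abs, abs_of_nonneg (h n).1]
      exact (h n).2
    calc eLpNorm (f n) 1 μ ≤ μ Set.univ ^ (1 : ENNReal).toReal⁻¹ * ENNReal.ofReal 1 :=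
          eLpNorm_le_of_ae_bound hb
      _ ≤ 1 := by simp [measure_univ]
  have htends := hmart.submartingale.ae_tendsto_limitProcess hL1
  -- define the limit
  set L : Ω → ℝ := ℱ'.limitProcess f μ with hL
  refine ⟨fun ω => max 0 (min 1 (L ω)), fun ω => ?_, ?_⟩
  · constructor
    · exact le_max_left _ _
    · exact max_le (by norm_num) (min_le_left _ _)
  · filter_upwards [htends, hfbdd] with ω ht hb
    have h0 : 0 ≤ L ω := ge_of_tendsto' ht fun n => (hb n).1
    have h1 : L ω ≤ 1 := le_of_tendsto' ht fun n => (hb n).2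
    have hx : max 0 (min 1 (L ω)) = L ω := by
      rw [min_eq_right h1, max_eq_right h0]
    rw [hx]
    have heq : (fun n => (fun t => (d t ω : ℝ) / t) (n + t₀)) = fun n => f n ω := by
      funext n
      simp [hfdef, add_comm]
    have := (tendsto_add_atTop_iff_nat (f := fun t => (d t ω : ℝ) / t)
      (l := 𝓝 (L ω)) t₀).mp (by rw [heq]; exact ht)
    exact this
end

section
/- Under the linear preferential attachment degree process axioms, writing X(t) := d(t)/t, for all natural numbers t ≥ m ≥ t₀ the conditional second-moment increment satisfies μ[X(t+1)² − X(t)² | ℱ_m] ≤ (1/t²)·X(m) almost everywhere. -/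
open MeasureTheory Filter

/-- Conditional second-moment increment bound for `X t = d t / t`:
`E[X(t+1)² − X(t)² | ℱ m] ≤ X(m)/t²` for `t ≥ m ≥ t₀`. -/
theorem pa_X_sq_increment {Ω : Type*} {m0 : MeasurableSpace Ω}
    (μ : Measure Ω) [IsProbabilityMeasure μ] (ℱ : Filtration ℕ m0)
    (t₀ : ℕ) (ht₀ : 1 ≤ t₀) (d : ℕ → Ω → ℕ)
    (hadapted : ∀ t, Measurable[ℱ t] (d t))
    (hinit : ∀ᵐ ω ∂μ, d t₀ ω ≤ t₀)
    (hstep : ∀ t, t₀ ≤ t → ∀ᵐ ω ∂μ, d (t + 1) ω = d t ω ∨ d (t + 1) ω = d t ω + 1)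
    (hcond : ∀ t, t₀ ≤ t →
      μ[(fun ω => (d (t + 1) ω : ℝ) - (d t ω : ℝ)) | ℱ t]
        =ᵐ[μ] fun ω => (d t ω : ℝ) / t) :
    ∀ m t, t₀ ≤ m → m ≤ t →
      ∀ᵐ ω ∂μ,
        (μ[(fun ω => ((d (t + 1) ω : ℝ) / (t + 1)) ^ 2 - ((d t ω : ℝ) / t) ^ 2) | ℱ m]) ω
          ≤ 1 / (t : ℝ) ^ 2 * ((d m ω : ℝ) / m) := by
  intro m t hm hmt
  have ht0 : t₀ ≤ t := hm.trans hmt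
  have ht1 : (1 : ℝ) ≤ t := by exact_mod_cast ht₀.trans ht0
  have htpos : (0 : ℝ) < t := lt_of_lt_of_le one_pos ht1
  -- measurability
  have hmeasF : ∀ s, Measurable[ℱ s] (fun ω => (d s ω : ℝ)) :=
    fun s => measurable_from_top.comp (hadapted s)
  have hmeas : ∀ s, Measurable (fun ω => (d s ω : ℝ)) :=
    fun s => (hmeasF s).mono (ℱ.le s) le_rfl
  -- a.s. bound `d s ≤ s`
  have hbd : ∀ s, t₀ ≤ s → ∀ᵐ ω ∂μ, (d s ω : ℝ) ≤ s := by
    intro s hs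
    induction s, hs using Nat.le_induction with
    | base => filter_upwards [hinit] with ω h; exact_mod_cast h
    | succ n hn ih =>
      filter_upwards [ih, hstep n hn] with ω h1 h2
      rcases h2 with h | h <;> rw [h] <;> push_cast <;> linarith
  -- integrability helper
  have hIb : ∀ (f : Ω → ℝ) (C : ℝ), Measurable f → (∀ᵐ ω ∂μ, |f ω| ≤ C) →
      Integrable f μ := fun f C hf h =>
    Integrable.mono' (integrable_const C) hf.aestronglyMeasurable
      (by simpa [Real.norm_eq_abs] using h)
  have hint : ∀ s, t₀ ≤ s → Integrable (fun ω => (d s ω : ℝ)) μ := by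
    intro s hs
    refine hIb _ (s : ℝ) (hmeas s) ?_
    filter_upwards [hbd s hs] with ω h
    rwa [abs_of_nonneg (by positivity)]
  -- one-step martingale property for X
  have hXstep : ∀ s, t₀ ≤ s →
      μ[fun ω => (d (s + 1) ω : ℝ) / (s + 1) | ℱ s] =ᵐ[μ] fun ω => (d s ω : ℝ) / s := by
    intro s hs
    have hs1 : (1 : ℝ) ≤ s := by exact_mod_cast ht₀.trans hs
    have hspos : (0 : ℝ) < s := lt_of_lt_of_le one_pos hs1
    have hrw : (fun ω => (d (s + 1) ω : ℝ) / (s + 1))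
        = ((s : ℝ) + 1)⁻¹ • ((fun ω => (d (s + 1) ω : ℝ) - (d s ω : ℝ))
            + fun ω => (d s ω : ℝ)) := by
      funext ω; simp [smul_eq_mul]; ring
    rw [hrw]
    have hds : μ[(fun ω => (d s ω : ℝ)) | ℱ s] = fun ω => (d s ω : ℝ) :=
      condExp_of_stronglyMeasurable (ℱ.le s) (hmeasF s).stronglyMeasurable (hint s hs)
    calc μ[((s : ℝ) + 1)⁻¹ • ((fun ω => (d (s + 1) ω : ℝ) - (d s ω : ℝ))
            + fun ω => (d s ω : ℝ)) | ℱ s]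
        =ᵐ[μ] ((s : ℝ) + 1)⁻¹ • μ[((fun ω => (d (s + 1) ω : ℝ) - (d s ω : ℝ))
            + fun ω => (d s ω : ℝ)) | ℱ s] := condExp_smul _ _ _
      _ =ᵐ[μ] ((s : ℝ) + 1)⁻¹ • (μ[(fun ω => (d (s + 1) ω : ℝ) - (d s ω : ℝ)) | ℱ s]
            + μ[(fun ω => (d s ω : ℝ)) | ℱ s]) := by
            have hadd := condExp_add
              ((hint (s+1) (hs.trans (Nat.le_succ s))).sub (hint s hs)) (hint s hs)
              (m := ℱ s)
            have hsub : ((fun ω => (d (s+1) ω : ℝ)) - fun ω => (d s ω : ℝ))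
                = (fun ω => (d (s+1) ω : ℝ) - (d s ω : ℝ)) := rfl
            rw [hsub] at hadd
            filter_upwards [hadd] with ω hω
            simp only [Pi.smul_apply, hω]
      _ =ᵐ[μ] fun ω => (d s ω : ℝ) / s := by
            rw [hds]
            filter_upwards [hcond s hs] with ω h
            simp only [Pi.smul_apply, Pi.add_apply, smul_eq_mul, h]
            field_simp
            ring
  -- martingale property down to ℱ m
  have hmart : ∀ s, m ≤ s →
      μ[fun ω => (d s ω : ℝ) / s | ℱ m] =ᵐ[μ] fun ω => (d m ω : ℝ) / m := by
    intro s hs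
    induction s, hs using Nat.le_induction with
    | base =>
      rw [condExp_of_stronglyMeasurable (ℱ.le m)
        ((hmeasF m).div_const _).stronglyMeasurable ((hint m hm).div_const _)]
    | succ n hn ih =>
      have hn0 : t₀ ≤ n := hm.trans hn
      push_cast
      calc μ[fun ω => (d (n + 1) ω : ℝ) / (n + 1) | ℱ m]
          =ᵐ[μ] μ[μ[fun ω => (d (n + 1) ω : ℝ) / (n + 1) | ℱ n] | ℱ m] :=
            (condExp_condExp_of_le (ℱ.mono hn) (ℱ.le n)).symm
        _ =ᵐ[μ] μ[fun ω => (d n ω : ℝ) / n | ℱ m] := condExp_congr_ae (hXstep n hn0)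
        _ =ᵐ[μ] fun ω => (d m ω : ℝ) / m := ih
  -- notation for main objects
  set Y : Ω → ℝ := fun ω => ((d (t + 1) ω : ℝ) / (t + 1)) ^ 2 - ((d t ω : ℝ) / t) ^ 2
    with hY
  set F : Ω → ℝ := fun ω => 2 * (d t ω : ℝ) + 1 with hF
  set G : Ω → ℝ := fun ω => (d (t + 1) ω : ℝ) - (d t ω : ℝ) with hG
  set H : Ω → ℝ := fun ω =>
    (d t ω : ℝ) ^ 2 * ((((t : ℝ) + 1) ^ 2)⁻¹ - ((t : ℝ) ^ 2)⁻¹) with hH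
  set c : ℝ := (((t : ℝ) + 1) ^ 2)⁻¹ with hc
  have hYZ : Y =ᵐ[μ] c • (F * G) + H := by
    filter_upwards [hstep t ht0] with ω h
    simp only [hY, hF, hG, hH, hc, Pi.add_apply, Pi.smul_apply, Pi.mul_apply, smul_eq_mul]
    have ht' : (t:ℝ) ≠ 0 := htpos.ne'
    have ht'' : (t:ℝ) + 1 ≠ 0 := by positivity
    rcases h with h | h <;> rw [h] <;> push_cast <;> field_simp <;> ring
  -- integrability of the pieces
  have hGb : ∀ᵐ ω ∂μ, |G ω| ≤ 1 := by
    filter_upwards [hstep t ht0] with ω h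
    rcases h with h | h <;> rw [hG] <;> simp only [h] <;> push_cast <;> simp
  have hGint : Integrable G μ := hIb _ 1 ((hmeas (t+1)).sub (hmeas t)) hGb
  have hFb : ∀ᵐ ω ∂μ, |F ω| ≤ 2 * t + 1 := by
    filter_upwards [hbd t ht0] with ω h
    simp only [hF]
    rw [abs_of_nonneg (by positivity)]
    linarith
  have hFGint : Integrable (F * G) μ := by
    refine hIb _ (2 * t + 1) (((hmeas t).const_mul 2).add_const 1 |>.mul
      ((hmeas (t+1)).sub (hmeas t))) ?_
    filter_upwards [hFb, hGb] with ω h1 h2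
    simp only [Pi.mul_apply, abs_mul]
    calc |F ω| * |G ω| ≤ (2 * t + 1) * 1 := by
          apply mul_le_mul h1 h2 (abs_nonneg _) (by positivity)
      _ = 2 * t + 1 := by ring
  have hHint : Integrable H μ := by
    refine hIb _ ((t : ℝ) ^ 2 * |(((t : ℝ) + 1) ^ 2)⁻¹ - ((t : ℝ) ^ 2)⁻¹|)
      (((hmeas t).pow_const 2).mul_const _) ?_
    filter_upwards [hbd t ht0] with ω h
    rw [hH, abs_mul, abs_of_nonneg (by positivity : (0:ℝ) ≤ (d t ω : ℝ)^2)]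
    apply mul_le_mul_of_nonneg_right _ (abs_nonneg _)
    have : (0:ℝ) ≤ (d t ω : ℝ) := by positivity
    nlinarith
  -- conditional expectation of Y given ℱ t, and the key inequality
  have hHmeas : StronglyMeasurable[ℱ t] H :=
    (((hmeasF t).pow_const 2).mul_const _).stronglyMeasurable
  have hB : μ[Y | ℱ t] ≤ᵐ[μ]
      fun ω => 1 / (t : ℝ) ^ 2 * ((d t ω : ℝ) / t) := by
    have e1 : μ[Y | ℱ t] =ᵐ[μ] μ[c • (F * G) + H | ℱ t] := condExp_congr_ae hYZ
    have e2 : μ[c • (F * G) + H | ℱ t]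
        =ᵐ[μ] μ[c • (F * G) | ℱ t] + μ[H | ℱ t] :=
      condExp_add (hFGint.smul c) hHint _
    have e3 : μ[c • (F * G) | ℱ t] =ᵐ[μ] c • μ[F * G | ℱ t] := condExp_smul _ _ _
    have e4 : μ[F * G | ℱ t] =ᵐ[μ] F * μ[G | ℱ t] :=
      condExp_mul_of_stronglyMeasurable_left
        (((hmeasF t).const_mul 2).add_const 1).stronglyMeasurable hFGint hGint
    have e5 : μ[G | ℱ t] =ᵐ[μ] fun ω => (d t ω : ℝ) / t := hcond t ht0
    have e6 : μ[H | ℱ t] = H := condExp_of_stronglyMeasurable (ℱ.le t) hHmeas hHint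
    filter_upwards [e1, e2, e3, e4, e5, hbd t ht0] with ω h1 h2 h3 h4 h5 hb
    rw [h1, h2, Pi.add_apply, h3, Pi.smul_apply, h4, Pi.mul_apply, h5, e6]
    simp only [hF, hH, hc, smul_eq_mul]
    have hx : (0:ℝ) ≤ (d t ω : ℝ) := by positivity
    set x : ℝ := (d t ω : ℝ) with hxdef
    have ht' : (t:ℝ) ≠ 0 := htpos.ne'
    have ht'' : (t:ℝ) + 1 ≠ 0 := by positivity
    have eL : (((t:ℝ) + 1) ^ 2)⁻¹ * ((2 * x + 1) * (x / t))
        + x ^ 2 * ((((t:ℝ) + 1) ^ 2)⁻¹ - ((t:ℝ) ^ 2)⁻¹)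
        = (x * ((t:ℝ) - x)) / ((t:ℝ) ^ 2 * ((t:ℝ) + 1) ^ 2) := by
      field_simp
      ring
    have eR : 1 / (t : ℝ) ^ 2 * (x / t) = x / (t:ℝ) ^ 3 := by
      rw [div_mul_div_comm, one_mul]
      ring_nf
    rw [eL, eR, div_le_div_iff₀ (by positivity) (by positivity)]
    nlinarith [mul_nonneg (mul_nonneg hx hx) (pow_nonneg htpos.le 3),
      mul_nonneg hx (pow_nonneg htpos.le 3), mul_nonneg hx (sq_nonneg (t:ℝ))]
  -- assemble
  have htower : μ[μ[Y | ℱ t] | ℱ m] =ᵐ[μ] μ[Y | ℱ m] :=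
    condExp_condExp_of_le (ℱ.mono hmt) (ℱ.le t)
  have hmono : μ[μ[Y | ℱ t] | ℱ m] ≤ᵐ[μ]
      μ[fun ω => 1 / (t : ℝ) ^ 2 * ((d t ω : ℝ) / t) | ℱ m] :=
    condExp_mono integrable_condExp (((hint t ht0).div_const _).const_mul _) hB
  have hsm : (fun ω => 1 / (t : ℝ) ^ 2 * ((d t ω : ℝ) / t))
      = (1 / (t : ℝ) ^ 2) • (fun ω => (d t ω : ℝ) / t) := by
    funext ω; simp [smul_eq_mul]
  have hfin : μ[fun ω => 1 / (t : ℝ) ^ 2 * ((d t ω : ℝ) / t) | ℱ m]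
      =ᵐ[μ] fun ω => 1 / (t : ℝ) ^ 2 * ((d m ω : ℝ) / m) := by
    rw [hsm]
    calc μ[(1 / (t : ℝ) ^ 2) • (fun ω => (d t ω : ℝ) / t) | ℱ m]
        =ᵐ[μ] (1 / (t : ℝ) ^ 2) • μ[fun ω => (d t ω : ℝ) / t | ℱ m] := condExp_smul _ _ _
      _ =ᵐ[μ] fun ω => 1 / (t : ℝ) ^ 2 * ((d m ω : ℝ) / m) := by
          filter_upwards [hmart t hmt] with ω h
          simp [h, smul_eq_mul]
  filter_upwards [htower.symm, hmono, hfin] with ω h1 h2 h3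
  calc (μ[Y | ℱ m]) ω = (μ[μ[Y | ℱ t] | ℱ m]) ω := h1
    _ ≤ (μ[fun ω => 1 / (t : ℝ) ^ 2 * ((d t ω : ℝ) / t) | ℱ m]) ω := h2
    _ = 1 / (t : ℝ) ^ 2 * ((d m ω : ℝ) / m) := h3
end

section
/- Under the linear preferential attachment degree process axioms, suppose additionally that 16 ≤ d(t₀) ≤ t₀ − 1 almost surely, and let x be the almost sure limit of X(t) := d(t)/t. Then for every integer i ≥ 1, μ{x < 2^{−i} · 8/t₀} < 2^{−i}. -/
open MeasureTheory Filter Topology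

open Finset

noncomputable def Mreal (k : ℕ) (b t : ℝ) : ℝ := ∏ j ∈ Finset.range k, (t - b + j) / (t + j)

lemma Mreal_nonneg {k : ℕ} {b s : ℝ} (hb : b ≤ s) (hs : 0 < s) : 0 ≤ Mreal k b s := by
  refine Finset.prod_nonneg fun j _ => div_nonneg (by have : (0:ℝ) ≤ j := Nat.cast_nonneg j; linarith) (by have : (0:ℝ) ≤ j := Nat.cast_nonneg j; linarith)

lemma Mreal_le_one {k : ℕ} {b s : ℝ} (h0 : 0 ≤ b) (hb : b ≤ s) (hs : 0 < s) : Mreal k b s ≤ 1 := by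
  refine Finset.prod_le_one (fun j _ => div_nonneg (by have : (0:ℝ) ≤ j := Nat.cast_nonneg j; linarith) (by have : (0:ℝ) ≤ j := Nat.cast_nonneg j; linarith)) (fun j _ => ?_)
  have : (0:ℝ) ≤ j := Nat.cast_nonneg j
  rw [div_le_one (by linarith)]; linarith

lemma measurable_Mreal {Ω : Type*} {mm : MeasurableSpace Ω} {g : Ω → ℝ} (hg : Measurable g)
    (k : ℕ) (s : ℝ) : Measurable fun ω => Mreal k (g ω) s := by
  unfold Mreal
  exact Finset.measurable_prod _ fun j _ =>
    ((measurable_const.sub hg).add measurable_const).div measurable_const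

lemma Mreal_step (k : ℕ) (b t : ℝ) (ht : 1 ≤ t) :
    Mreal k b (t + 1) + b / t * (Mreal k (b + 1) (t + 1) - Mreal k b (t + 1)) = Mreal k b t := by
  have ht0 : (0:ℝ) < t := lt_of_lt_of_le one_pos ht
  cases k with
  | zero => simp [Mreal]
  | succ k =>
    set P : ℝ := ∏ j ∈ Finset.range k, (t - b + 1 + j) with hP
    set Q : ℝ := ∏ j ∈ Finset.range k, (t + 1 + j) with hQdef
    have hQ : (0:ℝ) < Q := Finset.prod_pos fun j _ => by positivity
    have num1 : (∏ j ∈ Finset.range (k+1), (t + 1 - b + (j:ℝ))) = P * (t - b + 1 + k) := by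
      rw [Finset.prod_range_succ]
      congr 1
      · exact Finset.prod_congr rfl fun j _ => by ring
      · ring
    have num2 : (∏ j ∈ Finset.range (k+1), (t + 1 - (b + 1) + (j:ℝ))) = P * (t - b) := by
      rw [Finset.prod_range_succ']
      congr 1
      · exact Finset.prod_congr rfl fun j _ => by push_cast; ring
      · push_cast; ring
    have num3 : (∏ j ∈ Finset.range (k+1), (t - b + (j:ℝ))) = P * (t - b) := by
      rw [Finset.prod_range_succ']
      congr 1
      · exact Finset.prod_congr rfl fun j _ => by push_cast; ring
      · push_cast; ring
    have den1 : (∏ j ∈ Finset.range (k+1), (t + 1 + (j:ℝ))) = Q * (t + 1 + k) := by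
      rw [Finset.prod_range_succ]
    have den3 : (∏ j ∈ Finset.range (k+1), (t + (j:ℝ))) = Q * t := by
      rw [Finset.prod_range_succ']
      congr 1
      · exact Finset.prod_congr rfl fun j _ => by push_cast; ring
      · push_cast; ring
    have e1 : Mreal (k+1) b (t+1) = P * (t - b + 1 + k) / (Q * (t + 1 + k)) := by
      rw [Mreal, Finset.prod_div_distrib, num1, den1]
    have e2 : Mreal (k+1) (b+1) (t+1) = P * (t - b) / (Q * (t + 1 + k)) := by
      rw [Mreal, Finset.prod_div_distrib, num2, den1]
    have e3 : Mreal (k+1) b t = P * (t - b) / (Q * t) := by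
      rw [Mreal, Finset.prod_div_distrib, num3, den3]
    rw [e1, e2, e3]
    have h1 : t + 1 + (k:ℝ) > 0 := by positivity
    field_simp
    ring

lemma prod_ratio_id (k : ℕ) (a : ℝ) :
    (∏ j ∈ Finset.range k, (a + j)) * ∏ m ∈ Finset.range 16, (a + k + m)
      = (∏ j ∈ Finset.range k, (a + 16 + j)) * ∏ m ∈ Finset.range 16, (a + m) := by
  have h1 : (∏ i ∈ Finset.range (k + 16), (a + i))
      = (∏ j ∈ Finset.range k, (a + j)) * ∏ m ∈ Finset.range 16, (a + k + m) := by
    rw [Finset.prod_range_add]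
    congr 1
    exact Finset.prod_congr rfl fun j _ => by push_cast; ring
  have h2 : (∏ i ∈ Finset.range (16 + k), (a + i))
      = (∏ m ∈ Finset.range 16, (a + m)) * ∏ j ∈ Finset.range k, (a + 16 + j) := by
    rw [Finset.prod_range_add]
    congr 1
    exact Finset.prod_congr rfl fun j _ => by push_cast; ring
  rw [← h1, mul_comm ((∏ j ∈ Finset.range k, (a + 16 + j))), ← h2, add_comm]

open MeasureTheory Filter Topology Finset in
lemma Mbound_lemma (t₀ q k dv : ℕ) (ht17 : 17 ≤ t₀) (hq2 : 2 ≤ q) (hk : k = q * t₀)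
    (h16 : 16 ≤ dv) (hle : dv ≤ t₀ - 1) :
    Mreal k (dv : ℝ) (t₀ : ℝ) ≤ (1 / ((q:ℝ) + 1)) ^ 16 := by
  have ht₀R : (17:ℝ) ≤ (t₀:ℝ) := by exact_mod_cast ht17
  have hqR : (2:ℝ) ≤ (q:ℝ) := by exact_mod_cast hq2
  have hkq : (k:ℝ) = (q:ℝ) * (t₀:ℝ) := by rw [hk]; push_cast; ring
  have hk0 : (0:ℝ) ≤ (k:ℝ) := Nat.cast_nonneg _
  have hb16 : (16:ℝ) ≤ (dv : ℝ) := by exact_mod_cast h16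
  have hbt : (dv : ℝ) ≤ (t₀:ℝ) - 1 := by
    have h' : dv + 1 ≤ t₀ := by omega
    have h'' : ((dv : ℝ)) + 1 ≤ (t₀:ℝ) := by exact_mod_cast h'
    linarith
  have step1 : Mreal k (dv : ℝ) (t₀:ℝ)
      ≤ ∏ j ∈ Finset.range k, (((t₀:ℝ) - 16 + j) / ((t₀:ℝ) + j)) := by
    rw [Mreal]
    refine Finset.prod_le_prod (fun j _ => ?_) (fun j _ => ?_) <;>
      have hj : (0:ℝ) ≤ (j:ℝ) := Nat.cast_nonneg _
    · apply div_nonneg <;> linarith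
    · exact (div_le_div_iff_of_pos_right (by linarith)).mpr (by linarith)
  have step2 : (∏ j ∈ Finset.range k, (((t₀:ℝ) - 16 + j) / ((t₀:ℝ) + j)))
      = ∏ m ∈ Finset.range 16, ((((t₀:ℝ) - 16) + m) / (((t₀:ℝ) - 16) + k + m)) := by
    rw [Finset.prod_div_distrib, Finset.prod_div_distrib]
    have hden1 : (0:ℝ) < ∏ j ∈ Finset.range k, ((t₀:ℝ) + j) :=
      Finset.prod_pos fun j _ => by
        have hj : (0:ℝ) ≤ (j:ℝ) := Nat.cast_nonneg _; linarith
    have hden2 : (0:ℝ) < ∏ m ∈ Finset.range 16, (((t₀:ℝ) - 16) + k + m) :=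
      Finset.prod_pos fun m _ => by
        have hm : (0:ℝ) ≤ (m:ℝ) := Nat.cast_nonneg _; linarith
    rw [div_eq_div_iff hden1.ne' hden2.ne']
    have hcongr : (∏ j ∈ Finset.range k, ((t₀:ℝ) + j))
        = ∏ j ∈ Finset.range k, (((t₀:ℝ) - 16) + 16 + j) :=
      Finset.prod_congr rfl fun j _ => by ring
    have hid := prod_ratio_id k ((t₀:ℝ) - 16)
    rw [hcongr]
    linarith [hid]
  have step3 : (∏ m ∈ Finset.range 16, ((((t₀:ℝ) - 16) + m) / (((t₀:ℝ) - 16) + k + m)))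
      ≤ (1 / ((q:ℝ) + 1)) ^ 16 := by
    have hconst : (1 / ((q:ℝ) + 1)) ^ 16 = ∏ _m ∈ Finset.range 16, (1 / ((q:ℝ) + 1)) := by
      rw [Finset.prod_const, Finset.card_range]
    rw [hconst]
    refine Finset.prod_le_prod (fun m _ => ?_) (fun m hm => ?_) <;>
      have hm0 : (0:ℝ) ≤ (m:ℝ) := Nat.cast_nonneg _
    · apply div_nonneg <;> linarith
    · have hm15 : (m:ℝ) ≤ 15 := by
        have h15 : m ≤ 15 := Nat.lt_succ_iff.mp (Finset.mem_range.mp hm)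
        exact_mod_cast h15
      rw [div_le_div_iff₀ (by linarith) (by linarith)]
      have hqm : (q:ℝ) * ((m:ℝ) - 16) ≤ (q:ℝ) * 0 :=
        mul_le_mul_of_nonneg_left (by linarith) (by linarith)
      nlinarith [hqm]
  calc Mreal k (dv : ℝ) (t₀:ℝ) ≤ _ := step1
    _ = _ := step2
    _ ≤ _ := step3

lemma exp_lb_lemma {c : ℝ} (hc0 : 0 < c) (hc : c ≤ 1 / 2) : Real.exp (-(2 * c)) ≤ 1 - c := by
  have h1 := Real.add_one_le_exp (2 * c)
  have h0 : Real.exp (-(2 * c)) * Real.exp (2 * c) = 1 := by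
    rw [← Real.exp_add]; norm_num
  nlinarith [Real.exp_pos (-(2 * c))]

lemma exp16_lemma : Real.exp 16 < 2 ^ 24 := by
  have h1 : Real.exp 16 = (Real.exp 1) ^ 16 := by
    rw [← Real.exp_nat_mul]; norm_num
  rw [h1]
  calc (Real.exp 1) ^ 16 ≤ 2.7182818286 ^ 16 :=
        pow_le_pow_left₀ (Real.exp_nonneg 1) Real.exp_one_lt_d9.le 16
    _ < 2 ^ 24 := by norm_num

lemma numeric_key_lemma {q : ℝ} (hq : 2 ≤ q) : q * 2 ^ 24 < (q + 1) ^ 16 := by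
  have hq1 : (3:ℝ) ≤ q + 1 := by linarith
  have e2 : (3:ℝ) ^ 14 ≤ (q + 1) ^ 14 := pow_le_pow_left₀ (by norm_num) hq1 14
  have e3 : 4 * q ≤ (q + 1) ^ 2 := by nlinarith
  have e4 : (3:ℝ) ^ 14 * (4 * q) ≤ (q + 1) ^ 14 * (q + 1) ^ 2 :=
    mul_le_mul e2 e3 (by linarith) (by positivity)
  nlinarith [e4]

lemma integral_M_step {Ω : Type*} {m0 : MeasurableSpace Ω}
    (μ : Measure Ω) [IsProbabilityMeasure μ] (ℱ : Filtration ℕ m0)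
    (t₀ : ℕ) (ht₀ : 1 ≤ t₀) (d : ℕ → Ω → ℕ)
    (hadapted : ∀ t, Measurable[ℱ t] (d t))
    (hstep : ∀ t, t₀ ≤ t → ∀ᵐ ω ∂μ, d (t + 1) ω = d t ω ∨ d (t + 1) ω = d t ω + 1)
    (hcond : ∀ t, t₀ ≤ t →
      μ[(fun ω => (d (t + 1) ω : ℝ) - (d t ω : ℝ)) | ℱ t]
        =ᵐ[μ] fun ω => (d t ω : ℝ) / t)
    (hdle : ∀ᵐ ω ∂μ, ∀ t, t₀ ≤ t → d t ω ≤ t)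
    (k : ℕ) (t : ℕ) (ht : t₀ ≤ t) :
    ∫ ω, Mreal k (d (t+1) ω) ((t:ℝ)+1) ∂μ = ∫ ω, Mreal k (d t ω) (t:ℝ) ∂μ := by
  have ht1 : (1:ℝ) ≤ (t:ℝ) := by exact_mod_cast le_trans ht₀ ht
  have htpos : (0:ℝ) < t := lt_of_lt_of_le one_pos ht1
  have hb : Measurable[ℱ t] fun ω => (d t ω : ℝ) := measurable_from_top.comp (hadapted t)
  have hb0 : Measurable fun ω => (d t ω : ℝ) := (hb.mono (ℱ.le t) le_rfl)
  set A : Ω → ℝ := fun ω => Mreal k ((d t ω : ℝ)) ((t:ℝ)+1) with hA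
  set C : Ω → ℝ := fun ω => Mreal k ((d t ω : ℝ) + 1) ((t:ℝ)+1) - Mreal k ((d t ω : ℝ)) ((t:ℝ)+1) with hC
  set Δ : Ω → ℝ := fun ω => (d (t+1) ω : ℝ) - (d t ω : ℝ) with hΔ
  -- measurability
  have hmeasA : Measurable A := measurable_Mreal hb0 k _
  have hmeasC' : Measurable[ℱ t] C :=
    (measurable_Mreal (hb.add measurable_const) k _).sub (measurable_Mreal hb k _)
  have hmeasC : Measurable C := hmeasC'.mono (ℱ.le t) le_rfl
  have hmeasΔ : Measurable Δ :=
    (measurable_from_top.comp ((hadapted (t+1)).mono (ℱ.le (t+1)) le_rfl)).sub hb0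
  -- a.e. bounds
  have hbd : ∀ᵐ ω ∂μ, (d t ω : ℝ) ≤ (t : ℝ) := by
    filter_upwards [hdle] with ω h using by exact_mod_cast h t ht
  have hAbd : ∀ᵐ ω ∂μ, ‖A ω‖ ≤ 1 := by
    filter_upwards [hbd] with ω h
    rw [Real.norm_eq_abs, abs_le]
    constructor
    · linarith [Mreal_nonneg (k := k) (b := ((d t ω : ℝ))) (s := (t:ℝ)+1) (by linarith) (by linarith)]
    · exact Mreal_le_one (Nat.cast_nonneg _) (by linarith) (by linarith)
  have hCbd : ∀ᵐ ω ∂μ, ‖C ω‖ ≤ 2 := by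
    filter_upwards [hbd] with ω h
    rw [Real.norm_eq_abs, abs_le]
    have h1 := Mreal_nonneg (k := k) (b := ((d t ω : ℝ))) (s := (t:ℝ)+1) (by linarith) (by linarith)
    have h2 := Mreal_le_one (k := k) (b := ((d t ω : ℝ))) (s := (t:ℝ)+1) (Nat.cast_nonneg _) (by linarith) (by linarith)
    have h3 := Mreal_nonneg (k := k) (b := ((d t ω : ℝ)) + 1) (s := (t:ℝ)+1) (by linarith) (by linarith)
    have h4 := Mreal_le_one (k := k) (b := ((d t ω : ℝ)) + 1) (s := (t:ℝ)+1) (by positivity) (by linarith) (by linarith)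
    constructor <;> simp only [hC] <;> linarith
  have hΔbd : ∀ᵐ ω ∂μ, ‖Δ ω‖ ≤ 1 := by
    filter_upwards [hstep t ht] with ω h
    rw [Real.norm_eq_abs, abs_le]
    rcases h with h | h <;> simp [hΔ, h] <;> push_cast <;> constructor <;> linarith
  -- integrability
  have intA : Integrable A μ :=
    Integrable.mono' (integrable_const 1) hmeasA.aestronglyMeasurable hAbd
  have intC : Integrable C μ :=
    Integrable.mono' (integrable_const 2) hmeasC.aestronglyMeasurable hCbd
  have intΔ : Integrable Δ μ :=
    Integrable.mono' (integrable_const 1) hmeasΔ.aestronglyMeasurable hΔbd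
  have intCΔ : Integrable (C * Δ) μ := by
    refine Integrable.mono' (integrable_const 2) (hmeasC.mul hmeasΔ).aestronglyMeasurable ?_
    filter_upwards [hCbd, hΔbd] with ω h1 h2
    rw [Pi.mul_apply, norm_mul]
    calc ‖C ω‖ * ‖Δ ω‖ ≤ 2 * 1 := by
          exact mul_le_mul h1 h2 (norm_nonneg _) (by linarith [norm_nonneg (C ω)])
      _ = 2 := by norm_num
  -- pointwise decomposition a.e.
  have hdecomp : ∀ᵐ ω ∂μ, Mreal k (d (t+1) ω) ((t:ℝ)+1) = A ω + C ω * Δ ω := by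
    filter_upwards [hstep t ht] with ω h
    rcases h with h | h
    · simp [hA, hC, hΔ, h]
    · rw [h]
      push_cast
      simp only [hA, hC, hΔ, h]
      push_cast
      ring
  -- condexp pull-out
  haveI : SigmaFinite (μ.trim (ℱ.le t)) := inferInstance
  have hpull : μ[C * Δ | ℱ t] =ᵐ[μ] C * μ[Δ | ℱ t] :=
    condExp_mul_of_stronglyMeasurable_left hmeasC'.stronglyMeasurable intCΔ intΔ
  have hcondΔ : μ[Δ | ℱ t] =ᵐ[μ] fun ω => (d t ω : ℝ) / t := hcond t ht
  have hint_CΔ : ∫ ω, C ω * Δ ω ∂μ = ∫ ω, C ω * ((d t ω : ℝ) / t) ∂μ := by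
    have h0 : ∫ ω, (C * Δ) ω ∂μ = ∫ ω, C ω * ((d t ω : ℝ) / t) ∂μ := by
      rw [← integral_condExp (ℱ.le t) (μ := μ) (f := C * Δ)]
      refine integral_congr_ae (hpull.trans ?_)
      filter_upwards [hcondΔ] with ω h
      rw [Pi.mul_apply, h]
    simpa only [Pi.mul_apply] using h0
  calc ∫ ω, Mreal k (d (t+1) ω) ((t:ℝ)+1) ∂μ
      = ∫ ω, (A ω + C ω * Δ ω) ∂μ := integral_congr_ae hdecomp
    _ = ∫ ω, A ω ∂μ + ∫ ω, C ω * Δ ω ∂μ := integral_add intA intCΔ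
    _ = ∫ ω, A ω ∂μ + ∫ ω, C ω * ((d t ω : ℝ) / t) ∂μ := by rw [hint_CΔ]
    _ = ∫ ω, (A ω + C ω * ((d t ω : ℝ) / t)) ∂μ := by
        rw [← integral_add intA]
        · refine Integrable.mono' (integrable_const 2) (hmeasC.mul (hb0.div_const _)).aestronglyMeasurable ?_
          filter_upwards [hCbd, hbd] with ω h1 h2
          rw [norm_mul]
          have : ‖(d t ω : ℝ) / t‖ ≤ 1 := by
            rw [Real.norm_eq_abs, abs_div, abs_of_nonneg (Nat.cast_nonneg _), abs_of_pos htpos,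
              div_le_one htpos]
            exact h2
          calc ‖C ω‖ * ‖(d t ω : ℝ) / ↑t‖ ≤ 2 * 1 :=
                mul_le_mul h1 this (norm_nonneg _) (by linarith [norm_nonneg (C ω)])
            _ = 2 := by norm_num
    _ = ∫ ω, Mreal k (d t ω) (t:ℝ) ∂μ := by
        refine integral_congr_ae (Eventually.of_forall fun ω => ?_)
        have := Mreal_step k ((d t ω : ℝ)) (t:ℝ) ht1
        simp only [hA, hC]
        rw [← this]
        ring

set_option maxHeartbeats 1000000 in
/-- If `16 ≤ d t₀ ≤ t₀ - 1` a.s., then the a.s. limit `x` of `X t = d t / t`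
satisfies `μ{x < 2⁻ⁱ · 8/t₀} < 2⁻ⁱ` for every `i ≥ 1`. -/
theorem pa_limit_lower_tail {Ω : Type*} {m0 : MeasurableSpace Ω}
    (μ : Measure Ω) [IsProbabilityMeasure μ] (ℱ : Filtration ℕ m0)
    (t₀ : ℕ) (ht₀ : 1 ≤ t₀) (d : ℕ → Ω → ℕ)
    (hadapted : ∀ t, Measurable[ℱ t] (d t))
    (hinit : ∀ᵐ ω ∂μ, d t₀ ω ≤ t₀)
    (hstep : ∀ t, t₀ ≤ t → ∀ᵐ ω ∂μ, d (t + 1) ω = d t ω ∨ d (t + 1) ω = d t ω + 1)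
    (hcond : ∀ t, t₀ ≤ t →
      μ[(fun ω => (d (t + 1) ω : ℝ) - (d t ω : ℝ)) | ℱ t]
        =ᵐ[μ] fun ω => (d t ω : ℝ) / t)
    (hbig : ∀ᵐ ω ∂μ, 16 ≤ d t₀ ω ∧ d t₀ ω ≤ t₀ - 1)
    (x : Ω → ℝ)
    (hx : ∀ᵐ ω ∂μ, Tendsto (fun t => (d t ω : ℝ) / t) atTop (𝓝 (x ω))) :
    ∀ i : ℕ, 1 ≤ i →
      μ {ω | x ω < (1 / 2 ^ i) * (8 / (t₀ : ℝ))} < ENNReal.ofReal (1 / 2 ^ i) := by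
  intro i hi
  haveI hμne : (ae μ).NeBot := ae_neBot.mpr (IsProbabilityMeasure.ne_zero μ)
  obtain ⟨ω₀, hω₀⟩ := hbig.exists
  have ht17 : 17 ≤ t₀ := by omega
  set q : ℕ := 2 ^ i with hqdef
  have hq2 : 2 ≤ q := by
    calc 2 = 2 ^ 1 := rfl
      _ ≤ 2 ^ i := Nat.pow_le_pow_right (by norm_num) hi
  set k : ℕ := q * t₀ with hkdef
  have hqR : (2:ℝ) ≤ (q:ℝ) := by exact_mod_cast hq2
  have ht₀R : (17:ℝ) ≤ (t₀:ℝ) := by exact_mod_cast ht17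
  have hkq : (k:ℝ) = (q:ℝ) * (t₀:ℝ) := by rw [hkdef]; push_cast; ring
  have hqt : (0:ℝ) < (q:ℝ) * (t₀:ℝ) := by nlinarith
  set c : ℝ := 1 / 2 ^ i * (8 / (t₀ : ℝ)) with hcdef
  have hq_cast : ((q:ℝ)) = 2 ^ i := by rw [hqdef]; push_cast; ring
  have hc_eq : c = 8 / ((q:ℝ) * (t₀:ℝ)) := by
    rw [hcdef, hq_cast]; field_simp
  have hc_pos : 0 < c := by rw [hc_eq]; positivity
  have hc_half : c ≤ 1 / 2 := by
    rw [hc_eq]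
    rw [div_le_div_iff₀ hqt (by norm_num)]
    nlinarith
  -- a.e. facts
  have hstep_all : ∀ᵐ ω ∂μ, ∀ t, t₀ ≤ t →
      (d (t + 1) ω = d t ω ∨ d (t + 1) ω = d t ω + 1) := by
    rw [ae_all_iff]
    intro t
    by_cases h : t₀ ≤ t
    · filter_upwards [hstep t h] with ω hω _; exact hω
    · filter_upwards with ω h'; exact absurd h' h
  have hdle : ∀ᵐ ω ∂μ, ∀ t, t₀ ≤ t → d t ω ≤ t := by
    filter_upwards [hinit, hstep_all] with ω h0 hs
    intro t ht
    induction t, ht using Nat.le_induction with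
    | base => exact h0
    | succ n hn ih => rcases hs n hn with h | h <;> omega
  have hx01 : ∀ᵐ ω ∂μ, 0 ≤ x ω ∧ x ω ≤ 1 := by
    filter_upwards [hx, hdle] with ω hxω hdω
    constructor
    · refine ge_of_tendsto hxω (Eventually.of_forall fun t => by positivity)
    · refine le_of_tendsto hxω (eventually_atTop.mpr ⟨t₀ + 1, fun t ht => ?_⟩)
      have h1 : (1:ℝ) ≤ (t:ℝ) := by exact_mod_cast Nat.one_le_iff_ne_zero.mpr (by omega)
      rw [div_le_one (by linarith)]
      exact_mod_cast hdω t (by omega)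
  have hdmeas : ∀ t, Measurable fun ω => (d t ω : ℝ) :=
    fun t => measurable_from_top.comp ((hadapted t).mono (ℱ.le t) le_rfl)
  have hxaem : AEMeasurable x μ :=
    aemeasurable_of_tendsto_metrizable_ae atTop
      (fun t => ((hdmeas t).div_const _).aemeasurable) hx
  have hfaem : AEMeasurable (fun ω => (1 - x ω) ^ k) μ :=
    (aemeasurable_const.sub hxaem).pow_const k
  have hf_int : Integrable (fun ω => (1 - x ω) ^ k) μ := by
    refine Integrable.mono' (integrable_const 1) hfaem.aestronglyMeasurable ?_
    filter_upwards [hx01] with ω h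
    rw [norm_pow]
    refine pow_le_one₀ (norm_nonneg _) ?_
    rw [Real.norm_eq_abs, abs_le]
    constructor <;> linarith [h.1, h.2]
  have hf_nonneg : 0 ≤ᵐ[μ] fun ω => (1 - x ω) ^ k := by
    filter_upwards [hx01] with ω h
    exact pow_nonneg (by linarith [h.2]) k
  -- dominated convergence
  have hFmeas : ∀ n : ℕ,
      AEStronglyMeasurable (fun ω => Mreal k (d (t₀ + n) ω) ((t₀ + n : ℕ) : ℝ)) μ :=
    fun n => (measurable_Mreal (hdmeas (t₀ + n)) k _).aestronglyMeasurable
  have hspos : ∀ n : ℕ, (0:ℝ) < ((t₀ + n : ℕ) : ℝ) := by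
    intro n
    have : (1:ℝ) ≤ ((t₀ + n : ℕ) : ℝ) := by exact_mod_cast by omega
    linarith
  have hFbd : ∀ n : ℕ, ∀ᵐ ω ∂μ, ‖Mreal k (d (t₀ + n) ω) ((t₀ + n : ℕ) : ℝ)‖ ≤ 1 := by
    intro n
    filter_upwards [hdle] with ω h
    have hb : (d (t₀ + n) ω : ℝ) ≤ ((t₀ + n : ℕ) : ℝ) := by
      exact_mod_cast h (t₀ + n) (Nat.le_add_right _ _)
    rw [Real.norm_eq_abs, abs_le]
    exact ⟨by linarith [Mreal_nonneg (k := k) hb (hspos n)],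
      Mreal_le_one (Nat.cast_nonneg _) hb (hspos n)⟩
  have hlim : ∀ᵐ ω ∂μ, Tendsto (fun n => Mreal k (d (t₀ + n) ω) ((t₀ + n : ℕ) : ℝ))
      atTop (𝓝 ((1 - x ω) ^ k)) := by
    filter_upwards [hx] with ω hxω
    have hmono : Tendsto (fun n : ℕ => t₀ + n) atTop atTop :=
      (tendsto_add_atTop_nat t₀).congr fun n => add_comm n t₀
    have hcomp : Tendsto (fun n : ℕ => (d (t₀ + n) ω : ℝ) / ((t₀ + n : ℕ) : ℝ))
        atTop (𝓝 (x ω)) := hxω.comp hmono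
    have hinv : Tendsto (fun n : ℕ => (((t₀ + n : ℕ) : ℝ))⁻¹) atTop (𝓝 0) :=
      tendsto_inv_atTop_zero.comp (tendsto_natCast_atTop_atTop.comp hmono)
    have hprod : Tendsto (fun n => ∏ j ∈ Finset.range k,
        ((((t₀ + n : ℕ) : ℝ)) - d (t₀ + n) ω + j) / (((t₀ + n : ℕ) : ℝ) + j))
        atTop (𝓝 (∏ _j ∈ Finset.range k, (1 - x ω))) := by
      refine tendsto_finset_prod _ fun j _ => ?_
      have hfac : ∀ n : ℕ, ((((t₀ + n : ℕ) : ℝ)) - d (t₀ + n) ω + j) / (((t₀ + n : ℕ) : ℝ) + j)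
          = (1 - (d (t₀ + n) ω : ℝ) / ((t₀ + n : ℕ) : ℝ) + j * (((t₀ + n : ℕ) : ℝ))⁻¹)
            / (1 + j * (((t₀ + n : ℕ) : ℝ))⁻¹) := by
        intro n
        have hs0 : ((t₀ + n : ℕ) : ℝ) ≠ 0 := (hspos n).ne'
        have hsj : ((t₀ + n : ℕ) : ℝ) + j ≠ 0 := by
          have : (0:ℝ) ≤ (j:ℝ) := Nat.cast_nonneg _
          nlinarith [hspos n]
        field_simp
      have hnum : Tendsto (fun n => 1 - (d (t₀ + n) ω : ℝ) / ((t₀ + n : ℕ) : ℝ)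
          + j * (((t₀ + n : ℕ) : ℝ))⁻¹) atTop (𝓝 (1 - x ω + j * 0)) :=
        (tendsto_const_nhds.sub hcomp).add (tendsto_const_nhds.mul hinv)
      have hden : Tendsto (fun n => 1 + (j:ℝ) * (((t₀ + n : ℕ) : ℝ))⁻¹) atTop (𝓝 (1 + j * 0)) :=
        tendsto_const_nhds.add (tendsto_const_nhds.mul hinv)
      have hdiv := Tendsto.div hnum hden (by norm_num)
      refine Tendsto.congr (fun n => (hfac n).symm) ?_
      simp only [mul_zero, add_zero, div_one] at hdiv
      exact hdiv
    rw [Finset.prod_const, Finset.card_range] at hprod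
    exact hprod.congr fun n => rfl
  have hDCT := tendsto_integral_of_dominated_convergence (μ := μ)
      (F := fun n ω => Mreal k (d (t₀ + n) ω) ((t₀ + n : ℕ) : ℝ))
      (f := fun ω => (1 - x ω) ^ k) (bound := fun _ => 1)
      hFmeas (integrable_const 1) hFbd hlim
  have hconst : ∀ n : ℕ, ∫ ω, Mreal k (d (t₀ + n) ω) ((t₀ + n : ℕ) : ℝ) ∂μ
      = ∫ ω, Mreal k (d t₀ ω) (t₀ : ℝ) ∂μ := by
    intro n
    induction n with
    | zero => norm_num
    | succ n ih =>
      have hM := integral_M_step μ ℱ t₀ ht₀ d hadapted hstep hcond hdle k (t₀ + n)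
        (Nat.le_add_right _ _)
      rw [← ih, ← hM]
      congr 1
      funext ω
      congr 1
      push_cast
      ring
  have hIf : ∫ ω, (1 - x ω) ^ k ∂μ = ∫ ω, Mreal k (d t₀ ω) (t₀ : ℝ) ∂μ := by
    have h2 : Tendsto (fun n : ℕ => ∫ ω, Mreal k (d (t₀ + n) ω) ((t₀ + n : ℕ) : ℝ) ∂μ)
        atTop (𝓝 (∫ ω, Mreal k (d t₀ ω) (t₀ : ℝ) ∂μ)) := by
      simp only [hconst]; exact tendsto_const_nhds
    exact tendsto_nhds_unique hDCT h2
  -- bound the initial value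
  set R : ℝ := (1 / ((q:ℝ) + 1)) ^ 16 with hRdef
  have hR_pos : 0 < R := by rw [hRdef]; positivity
  have hMbound : ∀ᵐ ω ∂μ, Mreal k (d t₀ ω) (t₀ : ℝ) ≤ R := by
    filter_upwards [hbig] with ω hω
    exact Mbound_lemma t₀ q k (d t₀ ω) ht17 hq2 hkdef hω.1 hω.2
  have hint_M : Integrable (fun ω => Mreal k (d t₀ ω) (t₀ : ℝ)) μ := by
    refine Integrable.mono' (integrable_const 1)
      (measurable_Mreal (hdmeas t₀) k _).aestronglyMeasurable ?_
    filter_upwards [hinit] with ω h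
    have hb : (d t₀ ω : ℝ) ≤ (t₀:ℝ) := by exact_mod_cast h
    have hpos : (0:ℝ) < (t₀:ℝ) := by linarith
    rw [Real.norm_eq_abs, abs_le]
    exact ⟨by linarith [Mreal_nonneg (k := k) hb hpos],
      Mreal_le_one (Nat.cast_nonneg _) hb hpos⟩
  have hIM_le : ∫ ω, Mreal k (d t₀ ω) (t₀ : ℝ) ∂μ ≤ R := by
    calc ∫ ω, Mreal k (d t₀ ω) (t₀ : ℝ) ∂μ ≤ ∫ _ω, R ∂μ :=
          integral_mono_ae hint_M (integrable_const R) hMbound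
      _ = R := by simp
  -- Markov inequality
  set ε : ℝ := (1 - c) ^ k with hεdef
  have hmarkov := mul_meas_ge_le_integral_of_nonneg hf_nonneg hf_int ε
  have hST : {ω | x ω < c} ⊆ {ω | ε ≤ (1 - x ω) ^ k} := by
    intro ω hω
    simp only [Set.mem_setOf_eq] at hω ⊢
    exact pow_le_pow_left₀ (by linarith) (by linarith) k
  -- lower bound on ε
  have hck : c * (k:ℝ) = 8 := by
    rw [hc_eq, hkq]; field_simp
  have hexpε : Real.exp (-16) ≤ ε := by
    have h2c : Real.exp (-(2 * c)) ≤ 1 - c := exp_lb_lemma hc_pos hc_half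
    have hpow : (Real.exp (-(2 * c))) ^ k ≤ (1 - c) ^ k :=
      pow_le_pow_left₀ (Real.exp_nonneg _) h2c k
    have heq : Real.exp (-16) = (Real.exp (-(2 * c))) ^ k := by
      rw [← Real.exp_nat_mul]
      congr 1
      linear_combination (2:ℝ) * hck
    rw [hεdef]
    calc Real.exp (-16) = (Real.exp (-(2 * c))) ^ k := heq
      _ ≤ (1 - c) ^ k := hpow
  have hε_pos : 0 < ε := lt_of_lt_of_le (Real.exp_pos _) hexpε
  have hIR : ∫ ω, (1 - x ω) ^ k ∂μ ≤ R := hIf.le.trans hIM_le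
  have hm : (μ {ω | ε ≤ (1 - x ω) ^ k}).toReal ≤ R / ε := by
    rw [le_div_iff₀ hε_pos]
    calc (μ {ω | ε ≤ (1 - x ω) ^ k}).toReal * ε
        = ε * (μ {ω | ε ≤ (1 - x ω) ^ k}).toReal := by ring
      _ ≤ ∫ ω, (1 - x ω) ^ k ∂μ := hmarkov
      _ ≤ R := hIR
  -- numerics
  have hexp16 : Real.exp 16 < 2 ^ 24 := exp16_lemma
  have hεinv : ε⁻¹ ≤ Real.exp 16 := by
    have h1 : (Real.exp (-16))⁻¹ = Real.exp 16 := by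
      rw [← Real.exp_neg]; norm_num
    rw [← h1]
    exact inv_anti₀ (Real.exp_pos _) hexpε
  have hRε : R / ε < 1 / 2 ^ i := by
    have h1 : R / ε ≤ R * Real.exp 16 := by
      rw [div_eq_mul_inv]
      exact mul_le_mul_of_nonneg_left hεinv hR_pos.le
    have h2 : R * Real.exp 16 < R * 2 ^ 24 := by
      exact mul_lt_mul_of_pos_left hexp16 hR_pos
    have hq1 : (3:ℝ) ≤ (q:ℝ) + 1 := by linarith
    have key : (q:ℝ) * 2 ^ 24 < ((q:ℝ) + 1) ^ 16 := numeric_key_lemma hqR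
    have h3 : R * 2 ^ 24 < 1 / (q:ℝ) := by
      have hRe : R * 2 ^ 24 = 2 ^ 24 / ((q:ℝ) + 1) ^ 16 := by
        rw [hRdef, div_pow, one_pow]; ring
      rw [hRe, div_lt_div_iff₀ (by positivity) (by linarith)]
      nlinarith [key]
    have hq_inv : (1:ℝ) / (q:ℝ) = 1 / 2 ^ i := by rw [hq_cast]
    linarith
  -- conclusion
  have hfin : μ {ω | x ω < c} ≠ ⊤ := measure_ne_top μ _
  rw [ENNReal.lt_ofReal_iff_toReal_lt hfin]
  calc (μ {ω | x ω < c}).toReal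
      ≤ (μ {ω | ε ≤ (1 - x ω) ^ k}).toReal :=
        ENNReal.toReal_mono (measure_ne_top μ _) (measure_mono hST)
    _ ≤ R / ε := hm
    _ < 1 / 2 ^ i := hRε
end

section
/- Under the linear preferential attachment degree process axioms, suppose additionally that 1 ≤ d(t₀) ≤ t₀ − 1 almost surely (the vertex is standard), and let x be the almost sure limit of X(t) := d(t)/t. Then μ{x > 0} = 1 and μ{x < 1} = 1; that is, almost surely 0 < x < 1. -/
open MeasureTheory Filter Topology Finset

noncomputable def paG (n : ℕ) : ℝ := ∏ k ∈ Finset.Ico 1 n, ((k : ℝ) - 1/2) / k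

lemma paG_pos (n : ℕ) : 0 < paG n := by
  apply Finset.prod_pos
  intro k hk
  have hk1 : (1:ℝ) ≤ k := by exact_mod_cast (Finset.mem_Ico.mp hk).1
  have h2 : (0:ℝ) < k - 1/2 := by linarith
  have h3 : (0:ℝ) < k := by linarith
  positivity

lemma paG_le_one (n : ℕ) : paG n ≤ 1 := by
  apply Finset.prod_le_one
  · intro k hk
    have hk1 : (1:ℝ) ≤ k := by exact_mod_cast (Finset.mem_Ico.mp hk).1
    have h2 : (0:ℝ) ≤ k - 1/2 := by linarith
    positivity
  · intro k hk
    have hk1 : (1:ℝ) ≤ k := by exact_mod_cast (Finset.mem_Ico.mp hk).1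
    rw [div_le_one (by linarith)]
    linarith

lemma paG_succ {n : ℕ} (hn : 1 ≤ n) :
    paG (n + 1) = paG n * (((n : ℝ) - 1/2) / n) := by
  rw [paG, Finset.prod_Ico_succ_top hn]; rfl

lemma paG_sqrt_lower (n : ℕ) (hn : 1 ≤ n) :
    1 / (2 * Real.sqrt ((n : ℝ) - 3/4)) ≤ paG n := by
  induction n, hn using Nat.le_induction with
  | base =>
    have h1 : paG 1 = 1 := by simp [paG]
    rw [h1, show (((1:ℕ):ℝ) - 3/4) = (1/2)^2 by norm_num, Real.sqrt_sq (by norm_num)]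
    norm_num
  | succ n hn ih =>
    have hn1 : (1:ℝ) ≤ n := by exact_mod_cast hn
    rw [paG_succ hn]
    have hs1 : Real.sqrt ((n:ℝ) - 3/4) ^ 2 = (n:ℝ) - 3/4 :=
      Real.sq_sqrt (by linarith)
    have hs2 : Real.sqrt (((n:ℕ):ℝ) + 1 - 3/4) ^ 2 = (n:ℝ) + 1 - 3/4 :=
      Real.sq_sqrt (by linarith)
    have hp1 : 0 < Real.sqrt ((n:ℝ) - 3/4) := Real.sqrt_pos.mpr (by linarith)
    have hp2 : 0 < Real.sqrt ((n:ℝ) + 1 - 3/4) := Real.sqrt_pos.mpr (by linarith)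
    have key : 1 / (2 * Real.sqrt ((n:ℝ) + 1 - 3/4)) ≤
        1 / (2 * Real.sqrt ((n:ℝ) - 3/4)) * (((n : ℝ) - 1/2) / n) := by
      rw [div_mul_div_comm, one_mul, div_le_div_iff₀ (by positivity) (by positivity)]
      have h1 : (Real.sqrt ((n:ℝ) - 3/4) * n)^2 ≤ (((n:ℝ) - 1/2) * Real.sqrt ((n:ℝ) + 1 - 3/4))^2 := by
        rw [mul_pow, mul_pow, hs1, hs2]; nlinarith
      have habs : Real.sqrt ((n:ℝ) - 3/4) * n ≤ ((n:ℝ) - 1/2) * Real.sqrt ((n:ℝ) + 1 - 3/4) := by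
        have := Real.sqrt_le_sqrt h1
        rwa [Real.sqrt_sq (by positivity), Real.sqrt_sq (mul_nonneg (by linarith) hp2.le)] at this
      linarith
    push_cast at hs2 ⊢
    calc 1 / (2 * Real.sqrt ((n:ℝ) + 1 - 3/4)) ≤
        1 / (2 * Real.sqrt ((n:ℝ) - 3/4)) * (((n : ℝ) - 1/2) / n) := key
      _ ≤ paG n * (((n : ℝ) - 1/2) / n) := by
        apply mul_le_mul_of_nonneg_right ih
        have h2 : (0:ℝ) ≤ (n:ℝ) - 1/2 := by linarith
        positivity

lemma paG_lower (n : ℕ) (hn : 1 ≤ n) : 1 / (2 * Real.sqrt n) ≤ paG n := by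
  refine le_trans ?_ (paG_sqrt_lower n hn)
  have hn1 : (1:ℝ) ≤ n := by exact_mod_cast hn
  have h1 : Real.sqrt ((n:ℝ) - 3/4) ≤ Real.sqrt n := Real.sqrt_le_sqrt (by linarith)
  have h2 : 0 < Real.sqrt ((n:ℝ) - 3/4) := Real.sqrt_pos.mpr (by linarith)
  apply div_le_div_of_nonneg_left (by norm_num) (by positivity)
  linarith

noncomputable def paC (t₀ t : ℕ) : ℝ := ∏ s ∈ Finset.Ico t₀ t, (s : ℝ) / ((s : ℝ) - 1/2)

lemma paC_pos {t₀ : ℕ} (ht₀ : 1 ≤ t₀) (t : ℕ) : 0 < paC t₀ t := by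
  apply Finset.prod_pos
  intro s hs
  have h1 : (1:ℝ) ≤ s := by
    exact_mod_cast le_trans ht₀ (Finset.mem_Ico.mp hs).1
  have h2 : (0:ℝ) < (s:ℝ) - 1/2 := by linarith
  have h3 : (0:ℝ) < s := by linarith
  positivity

lemma paC_succ {t₀ t : ℕ} (ht : t₀ ≤ t) :
    paC t₀ (t + 1) = paC t₀ t * ((t : ℝ) / ((t : ℝ) - 1/2)) := by
  rw [paC, Finset.prod_Ico_succ_top ht]; rfl

lemma paC_self (t₀ : ℕ) : paC t₀ t₀ = 1 := by simp [paC]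

lemma paC_lower {t₀ : ℕ} (ht₀ : 1 ≤ t₀) (t : ℕ) (ht : t₀ ≤ t) :
    Real.sqrt t / Real.sqrt t₀ ≤ paC t₀ t := by
  induction t, ht using Nat.le_induction with
  | base =>
    rw [paC_self, div_self (by positivity : Real.sqrt t₀ ≠ 0)]
  | succ t ht ih =>
    have h1 : (1:ℝ) ≤ t := by exact_mod_cast le_trans ht₀ ht
    have ht0 : (0:ℝ) < Real.sqrt t₀ := Real.sqrt_pos.mpr (by positivity)
    have hs1 : Real.sqrt (t:ℝ) ^ 2 = (t:ℝ) := Real.sq_sqrt (by linarith)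
    have hs2 : Real.sqrt ((t:ℝ) + 1) ^ 2 = (t:ℝ) + 1 := Real.sq_sqrt (by linarith)
    have hp1 : 0 < Real.sqrt (t:ℝ) := Real.sqrt_pos.mpr (by linarith)
    have hp2 : 0 < Real.sqrt ((t:ℝ) + 1) := Real.sqrt_pos.mpr (by linarith)
    rw [paC_succ ht]
    have hd : (0:ℝ) < (t:ℝ) - 1/2 := by linarith
    have key : Real.sqrt ((t:ℝ) + 1) ≤ Real.sqrt (t:ℝ) * ((t : ℝ) / ((t : ℝ) - 1/2)) := by
      rw [mul_div_assoc', le_div_iff₀ hd]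
      have h1 : (Real.sqrt ((t:ℝ) + 1) * ((t:ℝ) - 1/2))^2 ≤ (Real.sqrt (t:ℝ) * t)^2 := by
        rw [mul_pow, mul_pow, hs1, hs2]; nlinarith
      have := Real.sqrt_le_sqrt h1
      rwa [Real.sqrt_sq (mul_nonneg hp2.le hd.le), Real.sqrt_sq (by positivity)] at this
    have step1 : Real.sqrt ((t:ℝ) + 1) / Real.sqrt t₀ ≤
        (Real.sqrt (t:ℝ) / Real.sqrt t₀) * ((t : ℝ) / ((t : ℝ) - 1/2)) := by
      rw [div_mul_eq_mul_div]
      gcongr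
    refine le_trans (by exact_mod_cast step1) (mul_le_mul_of_nonneg_right ih (by positivity))


lemma pa_limit_pos {Ω : Type*} {m0 : MeasurableSpace Ω}
    (μ : Measure Ω) [IsProbabilityMeasure μ] (ℱ : Filtration ℕ m0)
    (t₀ : ℕ) (d : ℕ → Ω → ℕ) (ht₀ : 1 ≤ t₀)
    (hadapted : ∀ t, Measurable[ℱ t] (d t))
    (hstep : ∀ t, t₀ ≤ t → ∀ᵐ ω ∂μ, d (t + 1) ω = d t ω ∨ d (t + 1) ω = d t ω + 1)
    (hcond : ∀ t, t₀ ≤ t →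
      μ[(fun ω => (d (t + 1) ω : ℝ) - (d t ω : ℝ)) | ℱ t]
        =ᵐ[μ] fun ω => (d t ω : ℝ) / t)
    (hpos : ∀ᵐ ω ∂μ, 1 ≤ d t₀ ω)
    (x : Ω → ℝ)
    (hx : ∀ᵐ ω ∂μ, Tendsto (fun t => (d t ω : ℝ) / t) atTop (𝓝 (x ω))) :
    ∀ᵐ ω ∂μ, 0 < x ω := by
  -- all steps hold a.e. simultaneously
  have hstepall : ∀ᵐ ω ∂μ, ∀ t, t₀ ≤ t →
      (d (t + 1) ω = d t ω ∨ d (t + 1) ω = d t ω + 1) := by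
    rw [ae_all_iff]
    intro t
    by_cases h : t₀ ≤ t
    · filter_upwards [hstep t h] with ω hω _ using hω
    · filter_upwards with ω h' using absurd h' h
  have hge : ∀ᵐ ω ∂μ, ∀ t, t₀ ≤ t → 1 ≤ d t ω := by
    filter_upwards [hstepall, hpos] with ω hs h1
    intro t ht
    induction t, ht using Nat.le_induction with
    | base => exact h1
    | succ t ht ih => rcases hs t ht with h | h <;> omega
  -- measurability helpers
  have hdm : ∀ t, Measurable (d t) := fun t => (hadapted t).mono (ℱ.le t) le_rfl
  -- the increment
  set Δ : ℕ → Ω → ℝ := fun t ω => (d (t + 1) ω : ℝ) - (d t ω : ℝ) with hΔ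
  have hcast : ∀ t, Measurable (fun ω => (d t ω : ℝ)) := fun t =>
    measurable_from_top.comp (hdm t)
  have hΔm : ∀ t, Measurable (Δ t) := fun t => (hcast (t+1)).sub (hcast t)
  have hΔbdd : ∀ t, t₀ ≤ t → ∀ᵐ ω ∂μ, ‖Δ t ω‖ ≤ 1 := by
    intro t ht
    filter_upwards [hstep t ht] with ω hω
    rcases hω with h | h <;> simp [hΔ, h] <;> norm_num
  have hΔint : ∀ t, t₀ ≤ t → Integrable (Δ t) μ := fun t ht =>
    (integrable_const (1:ℝ)).mono' (hΔm t).aestronglyMeasurable (hΔbdd t ht)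
  set G : ℕ → Ω → ℝ := fun t ω => paG (d t ω) with hG
  set A : ℕ → Ω → ℝ := fun t ω => paG (d t ω + 1) - paG (d t ω) with hA
  have hGsm : ∀ t, StronglyMeasurable[ℱ t] (G t) := by
    intro t
    exact ((measurable_from_top (f := paG)).comp (hadapted t)).stronglyMeasurable
  have hAsm : ∀ t, StronglyMeasurable[ℱ t] (A t) := by
    intro t
    exact ((measurable_from_top (f := fun n => paG (n + 1) - paG n)).comp
      (hadapted t)).stronglyMeasurable
  have hGint : ∀ t, Integrable (G t) μ := by
    intro t
    refine (integrable_const (1:ℝ)).mono'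
      ((hGsm t).mono (ℱ.le t)).aestronglyMeasurable ?_
    filter_upwards with ω
    simp only [hG]
    rw [Real.norm_eq_abs, abs_le]
    exact ⟨by linarith [paG_pos (d t ω)], paG_le_one _⟩
  have hAΔint : ∀ t, t₀ ≤ t → Integrable (A t * Δ t) μ := by
    intro t ht
    refine (integrable_const (1:ℝ)).mono'
      (((hAsm t).mono (ℱ.le t)).aestronglyMeasurable.mul (hΔm t).aestronglyMeasurable) ?_
    filter_upwards [hΔbdd t ht] with ω hω
    have h1 : |A t ω| ≤ 1 := by
      simp only [hA]
      rw [abs_le]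
      constructor
      · linarith [paG_pos (d t ω + 1), paG_le_one (d t ω)]
      · linarith [paG_pos (d t ω), paG_le_one (d t ω + 1)]
    calc ‖A t ω * Δ t ω‖ = |A t ω| * ‖Δ t ω‖ := by rw [Real.norm_eq_abs, abs_mul]; rfl
      _ ≤ 1 * 1 := mul_le_mul h1 hω (norm_nonneg _) zero_le_one
      _ = 1 := by norm_num
  have hkey : ∀ t, t₀ ≤ t → μ[G (t+1) | ℱ t]
      =ᵐ[μ] fun ω => paG (d t ω) * (1 - 1/(2*(t:ℝ))) := by
    intro t ht
    have he : G (t+1) =ᵐ[μ] G t + A t * Δ t := by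
      filter_upwards [hstep t ht] with ω hω
      rcases hω with h | h <;>
        simp only [hG, hA, hΔ, Pi.add_apply, Pi.mul_apply, h] <;> push_cast <;> ring
    calc μ[G (t+1) | ℱ t] =ᵐ[μ] μ[G t + A t * Δ t | ℱ t] := condExp_congr_ae he
      _ =ᵐ[μ] μ[G t | ℱ t] + μ[A t * Δ t | ℱ t] := condExp_add (hGint t) (hAΔint t ht) _
      _ =ᵐ[μ] G t + A t * μ[Δ t | ℱ t] :=
        EventuallyEq.add (Filter.EventuallyEq.of_eq
          (condExp_of_stronglyMeasurable (ℱ.le t) (hGsm t) (hGint t)))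
          (condExp_mul_of_stronglyMeasurable_left (hAsm t) (hAΔint t ht) (hΔint t ht))
      _ =ᵐ[μ] G t + A t * fun ω => (d t ω : ℝ) / t :=
        EventuallyEq.add EventuallyEq.rfl (EventuallyEq.mul EventuallyEq.rfl (hcond t ht))
      _ =ᵐ[μ] fun ω => paG (d t ω) * (1 - 1/(2*(t:ℝ))) := by
        filter_upwards [hge] with ω hω
        have h1 : 1 ≤ d t ω := hω t ht
        have hn : (1:ℝ) ≤ (d t ω : ℝ) := by exact_mod_cast h1
        have ht' : (1:ℝ) ≤ (t:ℝ) := by exact_mod_cast le_trans ht₀ ht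
        simp only [hG, hA, Pi.add_apply, Pi.mul_apply]
        rw [paG_succ h1]
        field_simp
        ring
  -- the martingale
  set 𝒢 : Filtration ℕ m0 :=
    ⟨fun n => ℱ (t₀ + n), fun i j hij => ℱ.mono (by omega), fun n => ℱ.le _⟩ with h𝒢
  set f : ℕ → Ω → ℝ := fun n ω => paC t₀ (t₀ + n) * paG (d (t₀ + n) ω) with hf
  have hfadp : StronglyAdapted 𝒢 f := by
    intro n
    exact (hGsm (t₀ + n)).const_mul _
  have hfint : ∀ n, Integrable (f n) μ := fun n => (hGint (t₀ + n)).const_mul _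
  have hfmart : Martingale f 𝒢 μ := by
    refine martingale_nat hfadp hfint fun n => ?_
    have ht : t₀ ≤ t₀ + n := Nat.le_add_right _ _
    have ht1 : (1:ℝ) ≤ (t₀ + n : ℕ) := by exact_mod_cast le_trans ht₀ ht
    have h1 : μ[f (n+1) | 𝒢 n]
        =ᵐ[μ] paC t₀ (t₀ + n + 1) • μ[G (t₀ + n + 1) | ℱ (t₀ + n)] := by
      have : f (n+1) = paC t₀ (t₀ + n + 1) • G (t₀ + n + 1) := rfl
      rw [this]
      exact condExp_smul _ _ _
    have h2 : paC t₀ (t₀ + n + 1) • μ[G (t₀ + n + 1) | ℱ (t₀ + n)]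
        =ᵐ[μ] f n := by
      filter_upwards [EventuallyEq.fun_comp (hkey (t₀ + n) ht) (fun y => paC t₀ (t₀ + n + 1) * y)]
        with ω hω
      simp only [Pi.smul_apply, smul_eq_mul, Function.comp] at hω ⊢
      rw [hω, hf, paC_succ ht]
      set T : ℝ := ((t₀ + n : ℕ) : ℝ) with hT
      have hden : T - 1/2 ≠ 0 := by intro h; rw [sub_eq_zero] at h; linarith
      have hT0 : T ≠ 0 := by intro h; rw [h] at ht1; linarith
      have hone : T / (T - 1/2) * (1 - 1/(2*T)) = 1 := by
        have hX : -(T * 2) + T ^ 2 * 4 ≠ 0 := by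
          intro h
          have h2 : (T - 1/2) * (4 * T) = 0 := by linarith [h]
          rcases mul_eq_zero.mp h2 with h' | h'
          · exact hden h'
          · exact hT0 (by linarith)
        field_simp
        exact div_self (by intro h; exact hden (by linarith))
      calc paC t₀ (t₀ + n) * (T / (T - 1/2)) * (paG (d (t₀ + n) ω) * (1 - 1/(2*T)))
          = paC t₀ (t₀ + n) * paG (d (t₀ + n) ω) * (T / (T - 1/2) * (1 - 1/(2*T))) := by
            ring
        _ = paC t₀ (t₀ + n) * paG (d (t₀ + n) ω) := by rw [hone, mul_one]
    exact ((h1.trans h2).symm : f n =ᵐ[μ] _)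
  -- L¹ bound
  have hfnonneg : ∀ n ω, 0 ≤ f n ω := by
    intro n ω
    exact mul_nonneg (paC_pos ht₀ _).le (paG_pos _).le
  have hbdd : ∀ n, eLpNorm (f n) 1 μ ≤ (1 : ENNReal) := by
    intro n
    have heq : ∫ ω, f n ω ∂μ = ∫ ω, f 0 ω ∂μ := by
      have hm := hfmart.2 0 n (Nat.zero_le n)
      calc ∫ ω, f n ω ∂μ = ∫ ω, (μ[f n | 𝒢 0]) ω ∂μ := (integral_condExp (𝒢.le 0)).symm
        _ = ∫ ω, f 0 ω ∂μ := integral_congr_ae hm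
    have h0 : ∫ ω, f 0 ω ∂μ ≤ 1 := by
      calc ∫ ω, f 0 ω ∂μ ≤ ∫ _ : Ω, (1:ℝ) ∂μ := by
            refine integral_mono (hfint 0) (integrable_const 1) fun ω => ?_
            simp only [hf, Nat.add_zero, paC_self, one_mul]
            exact paG_le_one _
        _ = 1 := by simp
    rw [eLpNorm_one_eq_lintegral_enorm, ← ofReal_integral_norm_eq_lintegral_enorm (hfint n)]
    rw [ENNReal.ofReal_le_one]
    calc ∫ ω, ‖f n ω‖ ∂μ = ∫ ω, f n ω ∂μ := by
          refine integral_congr_ae (Filter.Eventually.of_forall fun ω => ?_)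
          exact Real.norm_of_nonneg (hfnonneg n ω)
      _ ≤ 1 := heq ▸ h0
  have hlim := hfmart.submartingale.ae_tendsto_limitProcess hbdd
  -- conclusion
  filter_upwards [hlim, hge, hx] with ω hlimω hgeω hxω
  by_contra hcon
  push_neg at hcon
  have hxnn : 0 ≤ x ω := by
    refine ge_of_tendsto hxω ?_
    filter_upwards [eventually_ge_atTop 1] with t ht
    positivity
  have hx0 : x ω = 0 := le_antisymm hcon hxnn
  rw [hx0] at hxω
  set u : ℕ → ℝ := fun t => (d t ω : ℝ) / t with hu
  have hupos : ∀ t, t₀ ≤ t → 0 < u t := by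
    intro t ht
    have h1 : (1:ℝ) ≤ (d t ω : ℝ) := by exact_mod_cast hgeω t ht
    have h2 : (0:ℝ) < (t:ℝ) := by
      have : (1:ℝ) ≤ (t:ℝ) := by exact_mod_cast le_trans ht₀ ht
      linarith
    have h3 : (0:ℝ) < (d t ω : ℝ) := by linarith
    exact div_pos h3 h2
  have hsq0 : Tendsto (fun t => Real.sqrt (u t)) atTop (𝓝 0) := by
    have := (Real.continuous_sqrt.tendsto 0).comp hxω
    simpa [Function.comp_def, Real.sqrt_zero] using this
  have hsq : Tendsto (fun t => Real.sqrt (u t)) atTop (𝓝[>] 0) := by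
    rw [tendsto_nhdsWithin_iff]
    refine ⟨hsq0, ?_⟩
    filter_upwards [eventually_ge_atTop t₀] with t ht
    exact Real.sqrt_pos.mpr (hupos t ht)
  have hinv : Tendsto (fun t => (Real.sqrt (u t))⁻¹) atTop atTop :=
    hsq.inv_tendsto_nhdsGT_zero
  have hshift : Tendsto (fun n => (Real.sqrt (u (t₀ + n)))⁻¹) atTop atTop := by
    have := hinv.comp (tendsto_add_atTop_nat t₀)
    simpa [Function.comp_def, Nat.add_comm] using this
  have hlb : ∀ n, 1/(2 * Real.sqrt t₀) * (Real.sqrt (u (t₀ + n)))⁻¹ ≤ f n ω := by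
    intro n
    have ht : t₀ ≤ t₀ + n := Nat.le_add_right _ _
    have hd1 : 1 ≤ d (t₀ + n) ω := hgeω _ ht
    have hD1 : (1:ℝ) ≤ (d (t₀ + n) ω : ℝ) := by exact_mod_cast hd1
    have hT1 : (1:ℝ) ≤ ((t₀ + n : ℕ) : ℝ) := by exact_mod_cast le_trans ht₀ ht
    have hsqD : (0:ℝ) < Real.sqrt (d (t₀ + n) ω : ℝ) := Real.sqrt_pos.mpr (by linarith)
    have hsqT : (0:ℝ) < Real.sqrt ((t₀ + n : ℕ) : ℝ) := Real.sqrt_pos.mpr (by linarith)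
    have hsqt₀ : (0:ℝ) < Real.sqrt t₀ := Real.sqrt_pos.mpr (by exact_mod_cast ht₀)
    have step : Real.sqrt ((t₀ + n : ℕ) : ℝ) / Real.sqrt t₀ *
        (1 / (2 * Real.sqrt (d (t₀ + n) ω : ℝ))) ≤ f n ω := by
      refine mul_le_mul (paC_lower ht₀ _ ht) (paG_lower _ hd1) (by positivity)
        (paC_pos ht₀ _).le
    refine le_trans (le_of_eq ?_) step
    rw [hu]
    rw [Real.sqrt_div (by positivity : (0:ℝ) ≤ (d (t₀ + n) ω : ℝ)), inv_div]
    ring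
  exact not_tendsto_atTop_of_tendsto_nhds hlimω
    (tendsto_atTop_mono hlb (hshift.const_mul_atTop (by positivity)))


/-- For a standard vertex, the a.s. limit `x` of `X t = d t / t` satisfies
`0 < x < 1` almost surely. -/
theorem pa_limit_strictly_between {Ω : Type*} {m0 : MeasurableSpace Ω}
    (μ : Measure Ω) [IsProbabilityMeasure μ] (ℱ : Filtration ℕ m0)
    (t₀ : ℕ) (ht₀ : 1 ≤ t₀) (d : ℕ → Ω → ℕ)
    (hadapted : ∀ t, Measurable[ℱ t] (d t))
    (hinit : ∀ᵐ ω ∂μ, d t₀ ω ≤ t₀)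
    (hstep : ∀ t, t₀ ≤ t → ∀ᵐ ω ∂μ, d (t + 1) ω = d t ω ∨ d (t + 1) ω = d t ω + 1)
    (hcond : ∀ t, t₀ ≤ t →
      μ[(fun ω => (d (t + 1) ω : ℝ) - (d t ω : ℝ)) | ℱ t]
        =ᵐ[μ] fun ω => (d t ω : ℝ) / t)
    (hstd : ∀ᵐ ω ∂μ, 1 ≤ d t₀ ω ∧ d t₀ ω ≤ t₀ - 1)
    (x : Ω → ℝ)
    (hx : ∀ᵐ ω ∂μ, Tendsto (fun t => (d t ω : ℝ) / t) atTop (𝓝 (x ω))) :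
    μ {ω | 0 < x ω} = 1 ∧ μ {ω | x ω < 1} = 1 := by
  have hpos1 : ∀ᵐ ω ∂μ, 1 ≤ d t₀ ω := by filter_upwards [hstd] with ω h using h.1
  have h1 : ∀ᵐ ω ∂μ, 0 < x ω :=
    pa_limit_pos μ ℱ t₀ d ht₀ hadapted hstep hcond hpos1 x hx
  -- the complementary process
  set e : ℕ → Ω → ℕ := fun t ω => t - d t ω with he
  have hstepall : ∀ᵐ ω ∂μ, ∀ t, t₀ ≤ t →
      (d (t + 1) ω = d t ω ∨ d (t + 1) ω = d t ω + 1) := by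
    rw [ae_all_iff]
    intro t
    by_cases h : t₀ ≤ t
    · filter_upwards [hstep t h] with ω hω _ using hω
    · filter_upwards with ω h' using absurd h' h
  have hle : ∀ᵐ ω ∂μ, ∀ t, t₀ ≤ t → d t ω ≤ t := by
    filter_upwards [hstepall, hinit] with ω hs h1
    intro t ht
    induction t, ht using Nat.le_induction with
    | base => exact h1
    | succ t ht ih => rcases hs t ht with h | h <;> omega
  have hdm : ∀ t, Measurable (d t) := fun t => (hadapted t).mono (ℱ.le t) le_rfl
  have hadapted_e : ∀ t, Measurable[ℱ t] (e t) := by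
    intro t
    exact (measurable_from_top (f := fun k => t - k)).comp (hadapted t)
  have hstep_e : ∀ t, t₀ ≤ t →
      ∀ᵐ ω ∂μ, e (t + 1) ω = e t ω ∨ e (t + 1) ω = e t ω + 1 := by
    intro t ht
    filter_upwards [hstep t ht, hle] with ω h hl
    have h1 : d t ω ≤ t := hl t ht
    rcases h with h | h
    · right; simp only [he, h]; omega
    · left; simp only [he, h]; omega
  have hcond_e : ∀ t, t₀ ≤ t →
      μ[(fun ω => (e (t + 1) ω : ℝ) - (e t ω : ℝ)) | ℱ t]
        =ᵐ[μ] fun ω => (e t ω : ℝ) / t := by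
    intro t ht
    have hT : ((t:ℝ)) ≠ 0 := by
      have : (1:ℝ) ≤ (t:ℝ) := by exact_mod_cast le_trans ht₀ ht
      linarith
    set Δ : Ω → ℝ := fun ω => (d (t + 1) ω : ℝ) - (d t ω : ℝ) with hΔ
    have hΔm : Measurable Δ :=
      (measurable_from_top.comp (hdm (t+1))).sub (measurable_from_top.comp (hdm t))
    have hΔbdd : ∀ᵐ ω ∂μ, ‖Δ ω‖ ≤ 1 := by
      filter_upwards [hstep t ht] with ω hω
      rcases hω with h | h <;> simp [hΔ, h]
    have hΔint : Integrable Δ μ :=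
      (integrable_const (1:ℝ)).mono' hΔm.aestronglyMeasurable hΔbdd
    have he1 : (fun ω => (e (t + 1) ω : ℝ) - (e t ω : ℝ))
        =ᵐ[μ] (fun _ => (1:ℝ)) - Δ := by
      filter_upwards [hle] with ω hl
      have h1 : d t ω ≤ t := hl t ht
      have h2 : d (t+1) ω ≤ t + 1 := hl (t+1) (le_trans ht (Nat.le_succ t))
      simp only [he, Pi.sub_apply, hΔ]
      rw [Nat.cast_sub h2, Nat.cast_sub h1]
      push_cast
      ring
    calc μ[(fun ω => (e (t + 1) ω : ℝ) - (e t ω : ℝ)) | ℱ t]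
        =ᵐ[μ] μ[(fun _ => (1:ℝ)) - Δ | ℱ t] := condExp_congr_ae he1
      _ =ᵐ[μ] μ[(fun _ => (1:ℝ)) | ℱ t] - μ[Δ | ℱ t] :=
          condExp_sub (integrable_const 1) hΔint _
      _ =ᵐ[μ] (fun _ => (1:ℝ)) - μ[Δ | ℱ t] :=
          EventuallyEq.sub (EventuallyEq.of_eq (condExp_const (ℱ.le t) 1)) EventuallyEq.rfl
      _ =ᵐ[μ] (fun _ => (1:ℝ)) - fun ω => (d t ω : ℝ) / t :=
          EventuallyEq.sub EventuallyEq.rfl (hcond t ht)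
      _ =ᵐ[μ] fun ω => (e t ω : ℝ) / t := by
          filter_upwards [hle] with ω hl
          simp only [Pi.sub_apply, he]
          rw [Nat.cast_sub (hl t ht), sub_div, div_self hT]
  have hpos_e : ∀ᵐ ω ∂μ, 1 ≤ e t₀ ω := by
    filter_upwards [hstd] with ω h
    simp only [he]
    omega
  have hx_e : ∀ᵐ ω ∂μ, Tendsto (fun t => (e t ω : ℝ) / t) atTop (𝓝 (1 - x ω)) := by
    filter_upwards [hx, hle] with ω hxω hl
    have h1 : Tendsto (fun t : ℕ => 1 - (d t ω : ℝ) / t) atTop (𝓝 (1 - x ω)) :=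
      tendsto_const_nhds.sub hxω
    refine h1.congr' ?_
    filter_upwards [eventually_ge_atTop t₀, eventually_ge_atTop 1] with t h2 h3
    have hT : ((t:ℝ)) ≠ 0 := by
      have : (1:ℝ) ≤ (t:ℝ) := by exact_mod_cast h3
      linarith
    simp only [he]
    rw [Nat.cast_sub (hl t h2), sub_div, div_self hT]
  have h2 : ∀ᵐ ω ∂μ, 0 < 1 - x ω :=
    pa_limit_pos μ ℱ t₀ e ht₀ hadapted_e hstep_e hcond_e hpos_e (fun ω => 1 - x ω) hx_e
  have key : ∀ (s : Set Ω), (∀ᵐ ω ∂μ, ω ∈ s) → μ s = 1 := by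
    intro s hs
    have hc : μ sᶜ = 0 := by
      rw [ae_iff] at hs
      simpa [Set.compl_def] using hs
    refine le_antisymm prob_le_one ?_
    calc (1:ENNReal) = μ Set.univ := measure_univ.symm
      _ = μ (s ∪ sᶜ) := by rw [Set.union_compl_self]
      _ ≤ μ s + μ sᶜ := measure_union_le _ _
      _ = μ s := by rw [hc, add_zero]
  refine ⟨key _ h1, key _ ?_⟩
  filter_upwards [h2] with ω h
  show x ω < 1
  linarith
end

section
/- Under the linear preferential attachment degree process axioms, the martingale X(t) := d(t)/t (for t ≥ t₀) is bounded in L²: the quantities ∫ X(t)² dμ are uniformly bounded over t ≥ t₀, and indeed the sum over t ≥ t₀ of E[(X(t+1) − X(t))²] is finite. -/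
open MeasureTheory Filter

private lemma pa_sq_incr_bound (t a e : ℝ) (ht : 1 ≤ t) (ha0 : 0 ≤ a) (hat : a ≤ t)
    (he : e = 0 ∨ e = 1) :
    ((a + e) / (t + 1) - a / t) ^ 2 ≤ 1 / (t * (t + 1)) := by
  have ht0 : (0:ℝ) < t := by linarith
  have ht1 : (0:ℝ) < t + 1 := by linarith
  have h1 : (a + e) / (t + 1) - a / t = (e * t - a) / (t * (t + 1)) := by
    field_simp; ring
  rw [h1, div_pow, div_le_div_iff₀ (by positivity) (by positivity)]
  rcases he with h | h <;> subst h
  · have h2 : a ^ 2 ≤ t * (t + 1) := by nlinarith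
    nlinarith [mul_le_mul_of_nonneg_right h2 (mul_pos ht0 ht1).le]
  · have h2 : (t - a) ^ 2 ≤ t * (t + 1) := by nlinarith
    nlinarith [mul_le_mul_of_nonneg_right h2 (mul_pos ht0 ht1).le]

private lemma pa_telescope (t₀ : ℕ) (ht₀ : 1 ≤ t₀) (N : ℕ) :
    ∑ t ∈ Finset.Ico t₀ N, 1 / ((t : ℝ) * (t + 1)) ≤ 1 := by
  rcases le_or_gt N t₀ with h | h
  · rw [Finset.Ico_eq_empty (by omega)]
    simp
  · have key : ∀ M, t₀ ≤ M →
        ∑ t ∈ Finset.Ico t₀ M, 1 / ((t : ℝ) * (t + 1)) ≤ 1 / t₀ - 1 / M := by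
      intro M hM
      induction M, hM using Nat.le_induction with
      | base => simp
      | succ n hn ih =>
        rw [Finset.sum_Ico_succ_top hn]
        have hn1 : (1:ℝ) ≤ n := by exact_mod_cast le_trans ht₀ hn
        have hn0 : (0:ℝ) < n := by linarith
        have hid : 1 / ((n : ℝ) * (n + 1)) = 1 / n - 1 / (n + 1) := by
          field_simp; ring
        push_cast
        rw [hid]
        linarith
    have ht0' : (0:ℝ) < t₀ := by exact_mod_cast ht₀
    have hN0 : (0:ℝ) < N := by
      have : (t₀:ℝ) < N := by exact_mod_cast h
      linarith
    have := key N (le_of_lt h)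
    have h1 : (1:ℝ) / t₀ ≤ 1 := by
      rw [div_le_one ht0']
      exact_mod_cast ht₀
    have h2 : (0:ℝ) ≤ 1 / N := by positivity
    linarith

/-- The martingale `X t = d t / t` is bounded in `L²`, and the sum of the
expected squared increments is finite. -/
theorem pa_X_L2_bounded {Ω : Type*} {m0 : MeasurableSpace Ω}
    (μ : Measure Ω) [IsProbabilityMeasure μ] (ℱ : Filtration ℕ m0)
    (t₀ : ℕ) (ht₀ : 1 ≤ t₀) (d : ℕ → Ω → ℕ)
    (hadapted : ∀ t, Measurable[ℱ t] (d t))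
    (hinit : ∀ᵐ ω ∂μ, d t₀ ω ≤ t₀)
    (hstep : ∀ t, t₀ ≤ t → ∀ᵐ ω ∂μ, d (t + 1) ω = d t ω ∨ d (t + 1) ω = d t ω + 1)
    (hcond : ∀ t, t₀ ≤ t →
      μ[(fun ω => (d (t + 1) ω : ℝ) - (d t ω : ℝ)) | ℱ t]
        =ᵐ[μ] fun ω => (d t ω : ℝ) / t) :
    (∃ C : ℝ, ∀ t, t₀ ≤ t → ∫ ω, ((d t ω : ℝ) / t) ^ 2 ∂μ ≤ C) ∧
      ∃ B : ℝ, ∀ N : ℕ,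
        ∑ t ∈ Finset.Ico t₀ N,
          ∫ ω, ((d (t + 1) ω : ℝ) / (t + 1) - (d t ω : ℝ) / t) ^ 2 ∂μ ≤ B := by
  have hm : ∀ t, Measurable fun ω => (d t ω : ℝ) :=
    fun t => measurable_from_top.comp ((hadapted t).mono (ℱ.le t) le_rfl)
  -- The a.s. bound d t ≤ t for all t ≥ t₀
  have hb : ∀ t, t₀ ≤ t → ∀ᵐ ω ∂μ, d t ω ≤ t := by
    intro t ht
    induction t, ht using Nat.le_induction with
    | base => exact hinit
    | succ n hn ih =>
      filter_upwards [ih, hstep n hn] with ω h1 h2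
      rcases h2 with h | h <;> omega
  constructor
  · refine ⟨1, fun t ht => ?_⟩
    have ht1 : (1:ℝ) ≤ t := by exact_mod_cast le_trans ht₀ ht
    have hle : ∀ᵐ ω ∂μ, ((d t ω : ℝ) / t) ^ 2 ≤ 1 := by
      filter_upwards [hb t ht] with ω h
      have h' : (d t ω : ℝ) ≤ t := by exact_mod_cast h
      have h0 : (0:ℝ) ≤ (d t ω : ℝ) := Nat.cast_nonneg _
      have ht0 : (0:ℝ) < t := by linarith
      have hx1 : (d t ω : ℝ) / t ≤ 1 := by
        rw [div_le_one ht0]; exact h'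
      have hx0 : (0:ℝ) ≤ (d t ω : ℝ) / t := by positivity
      nlinarith
    have hint : Integrable (fun ω => ((d t ω : ℝ) / t) ^ 2) μ := by
      refine Integrable.mono' (integrable_const 1) ?_ ?_
      · exact (((hm t).div_const _).pow_const 2).aestronglyMeasurable
      · filter_upwards [hle] with ω h
        rw [Real.norm_eq_abs, abs_of_nonneg (by positivity)]
        exact h
    calc ∫ ω, ((d t ω : ℝ) / t) ^ 2 ∂μ ≤ ∫ _, (1:ℝ) ∂μ :=
          integral_mono_ae hint (integrable_const 1) hle
      _ = 1 := by simp
  · refine ⟨1, fun N => ?_⟩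
    have key : ∀ t, t₀ ≤ t →
        ∫ ω, ((d (t + 1) ω : ℝ) / (t + 1) - (d t ω : ℝ) / t) ^ 2 ∂μ
          ≤ 1 / ((t:ℝ) * (t + 1)) := by
      intro t ht
      have ht1 : (1:ℝ) ≤ t := by exact_mod_cast le_trans ht₀ ht
      have hle : ∀ᵐ ω ∂μ,
          ((d (t + 1) ω : ℝ) / (t + 1) - (d t ω : ℝ) / t) ^ 2 ≤ 1 / ((t:ℝ) * (t + 1)) := by
        filter_upwards [hb t ht, hstep t ht] with ω h1 h2
        have ha0 : (0:ℝ) ≤ (d t ω : ℝ) := Nat.cast_nonneg _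
        have hat : (d t ω : ℝ) ≤ t := by exact_mod_cast h1
        have he : ((d (t + 1) ω : ℝ) - d t ω) = 0 ∨ ((d (t + 1) ω : ℝ) - d t ω) = 1 := by
          rcases h2 with h | h
          · left; rw [h]; ring
          · right; rw [h]; push_cast; ring
        have hkey := pa_sq_incr_bound t (d t ω) ((d (t + 1) ω : ℝ) - d t ω) ht1 ha0 hat he
        have heq : (d t ω : ℝ) + ((d (t + 1) ω : ℝ) - d t ω) = d (t + 1) ω := by ring
        rwa [heq] at hkey
      have hint : Integrable
          (fun ω => ((d (t + 1) ω : ℝ) / (t + 1) - (d t ω : ℝ) / t) ^ 2) μ := by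
        refine Integrable.mono' (integrable_const (1 / ((t:ℝ) * (t + 1)))) ?_ ?_
        · exact ((((hm (t + 1)).div_const _).sub ((hm t).div_const _)).pow_const
            2).aestronglyMeasurable
        · filter_upwards [hle] with ω h
          rw [Real.norm_eq_abs, abs_of_nonneg (by positivity)]
          exact h
      calc ∫ ω, ((d (t + 1) ω : ℝ) / (t + 1) - (d t ω : ℝ) / t) ^ 2 ∂μ
          ≤ ∫ _, (1 / ((t:ℝ) * (t + 1))) ∂μ :=
            integral_mono_ae hint (integrable_const _) hle
        _ = 1 / ((t:ℝ) * (t + 1)) := by simp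
    calc ∑ t ∈ Finset.Ico t₀ N,
          ∫ ω, ((d (t + 1) ω : ℝ) / (t + 1) - (d t ω : ℝ) / t) ^ 2 ∂μ
        ≤ ∑ t ∈ Finset.Ico t₀ N, 1 / ((t:ℝ) * (t + 1)) :=
          Finset.sum_le_sum fun t htm => key t (Finset.mem_Ico.mp htm).1
      _ ≤ 1 := pa_telescope t₀ ht₀ N
end

section
/- Under the edge-count process axioms, the process Y(t) := 𝓔(t)/(t(t+1)) satisfies: (i) almost surely Y(t) ∈ (0,1) for all t ≥ t₀; (ii) (Y(t))_{t ≥ t₀} is a martingale with respect to (ℱ_t), i.e. μ[Y(t+1) | ℱ_t] = Y(t) almost everywhere for all t ≥ t₀; and (iii) there is a random variable y with values in [0,1] such that Y(t) → y almost surely. -/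
open MeasureTheory Filter Topology

/-- The normalised edge count `Y t = 𝓔 t / (t(t+1))` lies in `(0,1)`, is a
martingale, and converges almost surely to a limit `y ∈ [0,1]`. -/
theorem pa_edge_martingale {Ω : Type*} {m0 : MeasurableSpace Ω}
    (μ : Measure Ω) [IsProbabilityMeasure μ] (ℱ : Filtration ℕ m0)
    (t₀ : ℕ) (ht₀ : 2 ≤ t₀) (E : ℕ → Ω → ℕ)
    (hadapted : ∀ t, Measurable[ℱ t] (E t))
    (hbounds : ∀ᵐ ω ∂μ, ∀ t, t₀ ≤ t → 0 < E t ω ∧ 2 * E t ω < t * (t + 1))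
    (hmono : ∀ᵐ ω ∂μ, ∀ t, t₀ ≤ t → E t ω ≤ E (t + 1) ω)
    (hcond : ∀ t, t₀ ≤ t →
      μ[(fun ω => (E (t + 1) ω : ℝ) - (E t ω : ℝ)) | ℱ t]
        =ᵐ[μ] fun ω => 2 * (E t ω : ℝ) / t)
    (hcond2 : ∀ t, t₀ ≤ t →
      ∀ᵐ ω ∂μ,
        (μ[(fun ω => ((E (t + 1) ω : ℝ) - (E t ω : ℝ)) ^ 2) | ℱ t]) ω
          < (2 * (E t ω : ℝ) / t) ^ 2 + 2 * (E t ω : ℝ) / t) :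
    (∀ᵐ ω ∂μ, ∀ t, t₀ ≤ t → (E t ω : ℝ) / (t * (t + 1)) ∈ Set.Ioo (0 : ℝ) 1) ∧
      (∀ t, t₀ ≤ t →
        μ[(fun ω => (E (t + 1) ω : ℝ) / ((t + 1) * (t + 2))) | ℱ t]
          =ᵐ[μ] fun ω => (E t ω : ℝ) / (t * (t + 1))) ∧
      ∃ y : Ω → ℝ, (∀ ω, y ω ∈ Set.Icc (0 : ℝ) 1) ∧
        ∀ᵐ ω ∂μ, Tendsto (fun t => (E t ω : ℝ) / (t * (t + 1))) atTop (𝓝 (y ω)) := by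
  -- measurability of the real-valued edge counts
  have hmeas : ∀ t, Measurable[ℱ t] fun ω => (E t ω : ℝ) :=
    fun t => measurable_from_top.comp (hadapted t)
  have hmeas0 : ∀ t, Measurable fun ω => (E t ω : ℝ) :=
    fun t => (hmeas t).mono (ℱ.le t) le_rfl
  -- part (i)
  have hIoo : ∀ᵐ ω ∂μ, ∀ t, t₀ ≤ t → (E t ω : ℝ) / (t * (t + 1)) ∈ Set.Ioo (0 : ℝ) 1 := by
    filter_upwards [hbounds] with ω hω t ht
    obtain ⟨h1, h2⟩ := hω t ht
    have ht' : (2 : ℕ) ≤ t := le_trans ht₀ ht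
    have htpos : (0 : ℝ) < (t : ℝ) * (t + 1) := by positivity
    constructor
    · apply div_pos _ htpos
      exact_mod_cast h1
    · rw [div_lt_one htpos]
      have : (E t ω : ℝ) ≤ 2 * E t ω - 1 := by
        have : 1 ≤ E t ω := h1
        push_cast
        nlinarith [Nat.one_le_cast (α := ℝ) |>.2 this]
      have h2' : (2 * E t ω : ℝ) < (t : ℝ) * (t + 1) := by exact_mod_cast h2
      linarith
  -- integrability
  have hint : ∀ t, t₀ ≤ t → Integrable (fun ω => (E t ω : ℝ)) μ := by
    intro t ht
    refine (integrable_const ((t : ℝ) * (t + 1))).mono'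
      (hmeas0 t).aestronglyMeasurable ?_
    filter_upwards [hbounds] with ω hω
    obtain ⟨h1, h2⟩ := hω t ht
    have : (2 * E t ω : ℝ) < (t : ℝ) * (t + 1) := by exact_mod_cast h2
    rw [Real.norm_eq_abs, abs_of_nonneg (by positivity)]
    have : (0 : ℝ) ≤ (E t ω : ℝ) := by positivity
    linarith
  -- part (ii)
  have part2 : ∀ t, t₀ ≤ t →
      μ[(fun ω => (E (t + 1) ω : ℝ) / ((t + 1) * (t + 2))) | ℱ t]
        =ᵐ[μ] fun ω => (E t ω : ℝ) / (t * (t + 1)) := by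
    intro t ht
    have hintD : Integrable (fun ω => (E (t + 1) ω : ℝ) - (E t ω : ℝ)) μ :=
      (hint (t + 1) (le_trans ht (Nat.le_succ t))).sub (hint t ht)
    have h1 : μ[(fun ω => (E (t + 1) ω : ℝ)) | ℱ t]
        =ᵐ[μ] fun ω => 2 * (E t ω : ℝ) / t + (E t ω : ℝ) := by
      have heq : (fun ω => (E (t + 1) ω : ℝ))
          = (fun ω => (E (t + 1) ω : ℝ) - (E t ω : ℝ)) + fun ω => (E t ω : ℝ) := by
        funext ω; simp
      rw [heq]
      refine (condExp_add hintD (hint t ht) _).trans ?_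
      have h3 : μ[(fun ω => (E t ω : ℝ)) | ℱ t] = fun ω => (E t ω : ℝ) :=
        condExp_of_stronglyMeasurable (ℱ.le t) (hmeas t).stronglyMeasurable (hint t ht)
      filter_upwards [hcond t ht] with ω h4
      simp only [Pi.add_apply, h4, h3]
    have hc : (fun ω => (E (t + 1) ω : ℝ) / (((t : ℝ) + 1) * ((t : ℝ) + 2)))
        = (((t : ℝ) + 1) * ((t : ℝ) + 2))⁻¹ • fun ω => (E (t + 1) ω : ℝ) := by
      funext ω; simp [smul_eq_mul, div_eq_inv_mul]
    calc μ[(fun ω => (E (t + 1) ω : ℝ) / (((t : ℝ) + 1) * ((t : ℝ) + 2))) | ℱ t]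
        = μ[(((t : ℝ) + 1) * ((t : ℝ) + 2))⁻¹ • fun ω => (E (t + 1) ω : ℝ) | ℱ t] := by
          rw [hc]
      _ =ᵐ[μ] (((t : ℝ) + 1) * ((t : ℝ) + 2))⁻¹ • μ[(fun ω => (E (t + 1) ω : ℝ)) | ℱ t] :=
          condExp_smul _ _ _
      _ =ᵐ[μ] fun ω => (E t ω : ℝ) / ((t : ℝ) * ((t : ℝ) + 1)) := by
          filter_upwards [h1] with ω hω
          simp only [Pi.smul_apply, smul_eq_mul, hω]
          have ht2 : (2 : ℝ) ≤ (t : ℝ) := by exact_mod_cast le_trans ht₀ ht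
          have h0 : (t : ℝ) ≠ 0 := by linarith
          have h0' : (t : ℝ) + 1 ≠ 0 := by linarith
          have h0'' : (t : ℝ) + 2 ≠ 0 := by linarith
          field_simp
          ring
  refine ⟨hIoo, part2, ?_⟩
  -- part (iii): shifted process is a martingale
  set G : Filtration ℕ m0 :=
    ⟨fun n => ℱ (t₀ + n), fun i j h => ℱ.mono (by omega), fun n => ℱ.le _⟩ with hG
  set f : ℕ → Ω → ℝ := fun n ω => (E (t₀ + n) ω : ℝ) / ((t₀ + n : ℕ) * ((t₀ + n : ℕ) + 1))
    with hf
  have hfmart : Martingale f G μ := by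
    refine martingale_nat ?_ ?_ ?_
    · intro n
      exact ((hmeas (t₀ + n)).div_const _).stronglyMeasurable
    · intro n
      exact (hint (t₀ + n) (Nat.le_add_right _ _)).div_const _
    · intro n
      have h := part2 (t₀ + n) (Nat.le_add_right _ _)
      have hcongr : μ[f (n + 1) | G n]
          =ᵐ[μ] μ[(fun ω => (E ((t₀ + n) + 1) ω : ℝ)
              / ((((t₀ + n : ℕ) : ℝ) + 1) * (((t₀ + n : ℕ) : ℝ) + 2))) | ℱ (t₀ + n)] := by
        apply condExp_congr_ae
        filter_upwards with ω
        simp only [hf]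
        have ha : ((t₀ : ℝ) + n + 1) ≠ 0 := by positivity
        have hb : ((t₀ : ℝ) + n + 2) ≠ 0 := by positivity
        push_cast
        field_simp
        ring
      exact (hcongr.trans h).symm
  -- L¹ bound
  have hbdd : ∀ n, eLpNorm (f n) 1 μ ≤ (1 : NNReal) := by
    intro n
    refine le_trans (eLpNorm_le_of_ae_bound (C := 1) ?_) ?_
    · filter_upwards [hIoo] with ω hω
      have h := hω (t₀ + n) (Nat.le_add_right _ _)
      rw [Real.norm_eq_abs, abs_of_nonneg h.1.le]
      exact h.2.le
    · simp
  have htend := hfmart.submartingale.ae_tendsto_limitProcess hbdd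
  set L := G.limitProcess f μ with hL
  refine ⟨fun ω => max 0 (min 1 (L ω)), fun ω => ⟨le_max_left _ _,
    max_le zero_le_one (min_le_left _ _)⟩, ?_⟩
  filter_upwards [htend, hIoo] with ω hω hIω
  have hmem : ∀ n, f n ω ∈ Set.Icc (0 : ℝ) 1 := by
    intro n
    have h := hIω (t₀ + n) (Nat.le_add_right _ _)
    exact ⟨h.1.le, h.2.le⟩
  have hL0 : 0 ≤ L ω := ge_of_tendsto hω (Eventually.of_forall fun n => (hmem n).1)
  have hL1 : L ω ≤ 1 := le_of_tendsto hω (Eventually.of_forall fun n => (hmem n).2)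
  have hy : max 0 (min 1 (L ω)) = L ω := by
    rw [min_eq_right hL1, max_eq_right hL0]
  rw [hy]
  have hshift : Tendsto (fun n => (E (n + t₀) ω : ℝ) / ((n + t₀ : ℕ) * ((n + t₀ : ℕ) + 1)))
      atTop (𝓝 (L ω)) := by
    refine hω.congr fun n => ?_
    simp only [hf, Nat.add_comm t₀ n]
  exact (tendsto_add_atTop_iff_nat
    (f := fun t : ℕ => (E t ω : ℝ) / ((t : ℝ) * ((t : ℝ) + 1))) t₀).mp hshift
end
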